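/- arXiv:1102.4951 — 12 statements merged into one kernel-verified Lean document; each statement's English description precedes it below -/
import Mathlib

section
/- Let S be an m-element set, let k ≥ 1, and let X = (X_1, …, X_n) be a collection of n subsets of S (repetitions allowed). Then the following two conditions are equivalent: (HC1[k]) for every index set J ⊆ {1,…,n} with 1 ≤ |J| ≤ k, the union ⋃_{j∈J} X_j has at least |J| elements; (HC2[k]) for every subset T ⊆ S with 0 ≤ |T| ≤ k−1, the number of indices i with X_i ⊆ T is at most |T|. -/
/-!
The maps `J ↦ ⋃_{j ∈ J} X_j` and `T ↦ {i | X_i ⊆ T}` form a Galois connection. A violation of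
HC2 at `T` therefore contains an index set of size `|T| + 1 ≤ k` whose union lies in `T`,
violating HC1; and a violation of HC1 at `J` yields `T = ⋃_{j ∈ J} X_j` with `|T| ≤ k - 1`
and at least `|J| > |T|` indices `i` with `X_i ⊆ T`, violating HC2.
-/

namespace Finset

variable {ι α : Type*} [Fintype ι] [DecidableEq α]

theorem biUnion_subset_iff_subset_filter (X : ι → Finset α) (J : Finset ι) (T : Finset α) :
    J.biUnion X ⊆ T ↔ J ⊆ univ.filter (fun i => X i ⊆ T) := by
  simp [subset_iff (s₁ := J)]

theorem card_le_card_filter_subset_biUnion (X : ι → Finset α) (J : Finset ι) :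
    #J ≤ #(univ.filter fun i => X i ⊆ J.biUnion X) :=
  card_le_card ((biUnion_subset_iff_subset_filter X J _).mp subset_rfl)

theorem exists_card_eq_succ_biUnion_subset (X : ι → Finset α) {T : Finset α}
    (hT : #T < #(univ.filter fun i => X i ⊆ T)) :
    ∃ J : Finset ι, #J = #T + 1 ∧ J.biUnion X ⊆ T := by
  obtain ⟨J, hJ, hJcard⟩ := exists_subset_card_eq hT
  exact ⟨J, hJcard, (biUnion_subset_iff_subset_filter X J T).mpr hJ⟩

end Finset

theorem hall_conditions_equiv_general {α : Type*} [DecidableEq α]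
    (S : Finset α) (n k : ℕ) (hk : 1 ≤ k)
    (X : Fin n → Finset α) (hX : ∀ i, X i ⊆ S) :
    (∀ J : Finset (Fin n), 1 ≤ J.card → J.card ≤ k →
        J.card ≤ (J.biUnion X).card) ↔
    (∀ T : Finset α, T ⊆ S → T.card ≤ k - 1 →
        (Finset.univ.filter (fun i => X i ⊆ T)).card ≤ T.card) := by
  constructor
  · intro hall T _ hTk
    by_contra! hlt
    obtain ⟨J, hJcard, hJT⟩ := Finset.exists_card_eq_succ_biUnion_subset X hlt
    have hJ_le := hall J (by omega) (by omega)
    have hunion_le := Finset.card_le_card hJT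
    omega
  · intro hall J _ hJk
    by_contra! hlt
    have hfilter_le := hall (J.biUnion X) (Finset.biUnion_subset.mpr fun i _ => hX i) (by omega)
    have hJ_le := Finset.card_le_card_filter_subset_biUnion X J
    omega

/-- Equivalence of the two forms HC1[k] and HC2[k] of the restricted Hall condition
for a collection `X` of `n` subsets of an `m`-element set `S`. -/
theorem hall_conditions_equiv {α : Type*} [DecidableEq α]
    (S : Finset α) (m n k : ℕ) (hS : S.card = m) (hk : 1 ≤ k)
    (X : Fin n → Finset α) (hX : ∀ i, X i ⊆ S) :
    (∀ J : Finset (Fin n), 1 ≤ J.card → J.card ≤ k →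
        J.card ≤ (J.biUnion X).card) ↔
    (∀ T : Finset α, T ⊆ S → T.card ≤ k - 1 →
        (Finset.univ.filter (fun i => X i ⊆ T)).card ≤ T.card) :=
  hall_conditions_equiv_general S n k hk X hX
end

section
/- Let (S,X) be an (n,N,k,m)-CBC in which every member X_i is nonempty, and for each j ≥ 1 let A_j denote the number of indices i with |X_i| = j. Then for every integer i with 1 ≤ i ≤ k−1 one has ∑_{j=1}^{i} C(m−j, i−j) · A_j ≤ i · C(m, i), where C(a,b) denotes the binomial coefficient. -/
/-!
Double count the pairs `(t, T)` with `T` an `i`-subset of `S` and `X t ⊆ T`. A member of size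
`j ≤ i` lies in `C(m - j, i - j)` such `T`; conversely, the members contained in an `i`-set `T`
have union inside `T`, so the restricted Hall condition (applicable since `i + 1 ≤ k`) allows at
most `i` of them. Hence the number of pairs is at most `i · C(m, i)`.
-/

open Finset

variable {ι α : Type*}

theorem card_filter_subset_le_of_hall [Fintype ι] [DecidableEq α] {k : ℕ} {X : ι → Finset α}
    (hHall : ∀ J : Finset ι, 1 ≤ #J → #J ≤ k → #J ≤ #(J.biUnion X))
    {T : Finset α} (hT : #T < k) : #{t | X t ⊆ T} ≤ #T := by
  by_contra! hmany
  obtain ⟨J, hJ, hJcard⟩ := exists_subset_card_eq (Nat.succ_le_of_lt hmany)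
  have hJT : J.biUnion X ⊆ T := biUnion_subset.2 fun t ht ↦ (mem_filter.1 (hJ ht)).2
  have := hHall J (by omega) (by omega)
  have := card_le_card hJT
  omega

theorem sum_choose_le_mul_choose_of_card_filter_subset_le [Fintype ι] [Fintype α] [DecidableEq α]
    (X : ι → Finset α) {i c : ℕ} (hc : ∀ T : Finset α, #T = i → #{t | X t ⊆ T} ≤ c) :
    ∑ t with #(X t) ≤ i, (Fintype.card α - #(X t)).choose (i - #(X t))
      ≤ c * (Fintype.card α).choose i := by
  set P := (univ : Finset α).powersetCard i
  calc ∑ t with #(X t) ≤ i, (Fintype.card α - #(X t)).choose (i - #(X t))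
      = ∑ t with #(X t) ≤ i, #(P.bipartiteAbove (fun t T ↦ X t ⊆ T) t) := by
        refine sum_congr rfl fun t ht ↦ ?_
        rw [bipartiteAbove, card_filter_powersetCard_subset _ _ _ (subset_univ _)
          (mem_filter.1 ht).2, card_univ]
    _ ≤ ∑ t, #(P.bipartiteAbove (fun t T ↦ X t ⊆ T) t) :=
        sum_le_sum_of_subset (filter_subset _ _)
    _ = ∑ T ∈ P, #(univ.bipartiteBelow (fun t T ↦ X t ⊆ T) T) :=
        sum_card_bipartiteAbove_eq_sum_card_bipartiteBelow _
    _ ≤ ∑ _T ∈ P, c := sum_le_sum fun T hT ↦ hc T (mem_powersetCard.1 hT).2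
    _ = c * (Fintype.card α).choose i := by
        rw [sum_const, card_powersetCard, card_univ, smul_eq_mul, mul_comm]

theorem sum_mul_card_filter_eq_sum_filter [Fintype ι] {κ : Type*} [DecidableEq κ]
    (s : Finset κ) (g : ι → κ) (f : κ → ℕ) :
    ∑ j ∈ s, f j * #{t | g t = j} = ∑ t with g t ∈ s, f (g t) := by
  rw [← sum_fiberwise_eq_sum_filter']
  exact sum_congr rfl fun j _ ↦ by rw [sum_const, smul_eq_mul, mul_comm]

theorem cbc_double_counting_general (n k m : ℕ) (X : Fin n → Finset (Fin m))
    (hHall : ∀ J : Finset (Fin n), 1 ≤ J.card → J.card ≤ k →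
        J.card ≤ (J.biUnion X).card)
    (i : ℕ) (hi1 : 1 ≤ i) (hik : i ≤ k - 1) :
    ∑ j ∈ Finset.Icc 1 i,
        Nat.choose (m - j) (i - j) *
          (Finset.univ.filter (fun t => (X t).card = j)).card
      ≤ i * Nat.choose m i := by
  have hsmall : ∀ T : Finset (Fin m), #T = i → #{t | X t ⊆ T} ≤ i := fun T hT ↦
    hT ▸ card_filter_subset_le_of_hall hHall (by omega : #T < k)
  calc ∑ j ∈ Icc 1 i, (m - j).choose (i - j) * #{t | #(X t) = j}
      = ∑ t with #(X t) ∈ Icc 1 i, (m - #(X t)).choose (i - #(X t)) :=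
        sum_mul_card_filter_eq_sum_filter _ _ (fun j ↦ (m - j).choose (i - j))
    _ ≤ ∑ t with #(X t) ≤ i, (m - #(X t)).choose (i - #(X t)) :=
        sum_le_sum_of_subset fun t ↦ by simp only [mem_filter, mem_Icc]; tauto
    _ ≤ i * m.choose i := by
        simpa using sum_choose_le_mul_choose_of_card_filter_subset_le X hsmall

/-- The double-counting inequalities satisfied by an (n,N,k,m)-CBC whose members
are all nonempty: for `1 ≤ i ≤ k-1`, `∑_{j=1}^{i} C(m-j, i-j)·A_j ≤ i·C(m,i)`,
where `A_j` is the number of members of cardinality `j`. -/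
theorem cbc_double_counting (n N k m : ℕ) (X : Fin n → Finset (Fin m))
    (hN : ∑ t, (X t).card = N)
    (hne : ∀ t, (X t).Nonempty)
    (hHall : ∀ J : Finset (Fin n), 1 ≤ J.card → J.card ≤ k →
        J.card ≤ (J.biUnion X).card)
    (i : ℕ) (hi1 : 1 ≤ i) (hik : i ≤ k - 1) :
    ∑ j ∈ Finset.Icc 1 i,
        Nat.choose (m - j) (i - j) *
          (Finset.univ.filter (fun t => (X t).card = j)).card
      ≤ i * Nat.choose m i :=
  cbc_double_counting_general n k m X hHall i hi1 hik
end

section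
/- Let m ≥ 3 and 1 ≤ i ≤ m−2 be integers, and let A_1, A_2, …, A_{i+1} be nonnegative real numbers. If ∑_{j=1}^{i+1} C(m−j, i−j+1) · A_j ≤ (i+1) · C(m, i+1), then ∑_{j=1}^{i} C(m−j, i−j) · A_j ≤ i · C(m, i). -/
/-!
Multiply the `i`-th sum by `m - i`. Since `(m-i)·C(m-j, i-j) = (i-j+1)·C(m-j, i-j+1) ≤ i·C(m-j, i-j+1)`,
the result is at most `i` times the `(i+1)`-th sum, hence at most `i·(i+1)·C(m, i+1) = i·(m-i)·C(m, i)`.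
-/

open Finset

theorem sub_mul_choose_sub_le {m i j : ℕ} (hj : 1 ≤ j) (hji : j ≤ i) :
    (m - i) * (m - j).choose (i - j) ≤ i * (m - j).choose (i - j + 1) := by
  have h := Nat.choose_succ_right_eq (m - j) (i - j)
  rw [show m - j - (i - j) = m - i by omega] at h
  calc (m - i) * (m - j).choose (i - j)
      = (m - j).choose (i - j + 1) * (i - j + 1) := by rw [h, mul_comm]
    _ ≤ (m - j).choose (i - j + 1) * i := Nat.mul_le_mul_left _ (by omega)
    _ = i * (m - j).choose (i - j + 1) := mul_comm _ _

theorem sub_mul_sum_choose_le {m i : ℕ} {A : ℕ → ℝ} (hA : ∀ j, 0 ≤ A j) :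
    ((m - i : ℕ) : ℝ) * ∑ j ∈ Icc 1 i, ((m - j).choose (i - j) : ℝ) * A j ≤
      i * ∑ j ∈ Icc 1 (i + 1), ((m - j).choose (i - j + 1) : ℝ) * A j := by
  have hterm : ∀ j ∈ Icc 1 i, ((m - i : ℕ) : ℝ) * (((m - j).choose (i - j) : ℝ) * A j) ≤
      i * (((m - j).choose (i - j + 1) : ℝ) * A j) := by
    intro j hj
    rw [mem_Icc] at hj
    have hnat : (((m - i) * (m - j).choose (i - j) : ℕ) : ℝ) ≤
        ((i * (m - j).choose (i - j + 1) : ℕ) : ℝ) :=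
      Nat.cast_le.mpr (sub_mul_choose_sub_le hj.1 hj.2)
    push_cast at hnat
    simpa only [mul_assoc] using mul_le_mul_of_nonneg_right hnat (hA j)
  calc ((m - i : ℕ) : ℝ) * ∑ j ∈ Icc 1 i, ((m - j).choose (i - j) : ℝ) * A j
      ≤ i * ∑ j ∈ Icc 1 i, ((m - j).choose (i - j + 1) : ℝ) * A j := by
        rw [mul_sum, mul_sum]
        exact sum_le_sum hterm
    _ ≤ i * ∑ j ∈ Icc 1 (i + 1), ((m - j).choose (i - j + 1) : ℝ) * A j := by
        gcongr
        · exact fun j _ _ => mul_nonneg (Nat.cast_nonneg _) (hA j)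
        · omega

theorem double_counting_redundant_general (m i : ℕ) (hi1 : 1 ≤ i) (hi2 : i ≤ m - 2)
    (A : ℕ → ℝ) (hA : ∀ j, 0 ≤ A j)
    (h : ∑ j ∈ Finset.Icc 1 (i + 1),
        (Nat.choose (m - j) (i - j + 1) : ℝ) * A j ≤ (i + 1) * Nat.choose m (i + 1)) :
    ∑ j ∈ Finset.Icc 1 i,
        (Nat.choose (m - j) (i - j) : ℝ) * A j ≤ i * Nat.choose m i := by
  have him : i < m := by omega
  have hc : (0 : ℝ) < ((m - i : ℕ) : ℝ) := by exact_mod_cast Nat.sub_pos_of_lt him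
  have hid : ((i : ℝ) + 1) * m.choose (i + 1) = ((m - i : ℕ) : ℝ) * m.choose i := by
    have := Nat.choose_succ_right_eq m i
    rw [mul_comm, mul_comm (m.choose i)] at this
    exact_mod_cast this
  refine le_of_mul_le_mul_left ?_ hc
  calc ((m - i : ℕ) : ℝ) * ∑ j ∈ Icc 1 i, ((m - j).choose (i - j) : ℝ) * A j
      ≤ i * ∑ j ∈ Icc 1 (i + 1), ((m - j).choose (i - j + 1) : ℝ) * A j :=
        sub_mul_sum_choose_le hA
    _ ≤ i * ((i + 1) * m.choose (i + 1)) := by gcongr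
    _ = ((m - i : ℕ) : ℝ) * (i * m.choose i) := by rw [hid]; ring

/-- Among the double-counting inequalities, the (i+1)-th implies the i-th:
for `m ≥ 3`, `1 ≤ i ≤ m-2` and nonnegative reals `A_1, …, A_{i+1}`, if
`∑_{j=1}^{i+1} C(m-j, i-j+1)·A_j ≤ (i+1)·C(m, i+1)` then
`∑_{j=1}^{i} C(m-j, i-j)·A_j ≤ i·C(m, i)`. -/
theorem double_counting_redundant (m i : ℕ) (hm : 3 ≤ m) (hi1 : 1 ≤ i) (hi2 : i ≤ m - 2)
    (A : ℕ → ℝ) (hA : ∀ j, 0 ≤ A j)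
    (h : ∑ j ∈ Finset.Icc 1 (i + 1),
        (Nat.choose (m - j) (i - j + 1) : ℝ) * A j ≤ (i + 1) * Nat.choose m (i + 1)) :
    ∑ j ∈ Finset.Icc 1 i,
        (Nat.choose (m - j) (i - j) : ℝ) * A j ≤ i * Nat.choose m i :=
  double_counting_redundant_general m i hi1 hi2 A hA h
end

section
/- Let 1 ≤ c ≤ k−1 ≤ m−1 be integers. If there exists a c-uniform (n, cn, k, m)-CBC, i.e. an (n,N,k,m)-CBC in which every member X_i has cardinality exactly c (so N = cn), then n · C(k−1, c) ≤ (k−1) · C(m, c); equivalently n ≤ (k−1)C(m,c)/C(k−1,c). -/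
/-!
Double count the pairs `(i, Y)` with `Y` a `(k-1)`-subset of the ground set containing `X i`.
Each `X i` lies in `C(m-c, k-1-c)` such `Y`, while by the Hall condition each `Y` contains
at most `k-1` members (otherwise `k` of them would have a union of size `k-1`). Hence
`n·C(m-c, k-1-c) ≤ (k-1)·C(m, k-1)`, and `C(m, k-1)·C(k-1, c) = C(m, c)·C(m-c, k-1-c)`
turns this into the bound.
-/

open Finset

theorem card_filter_subset_le_of_restricted_hall {ι α : Type*} [Fintype ι] [DecidableEq α]
    {X : ι → Finset α} {k : ℕ}
    (hHall : ∀ J : Finset ι, 1 ≤ #J → #J ≤ k → #J ≤ #(J.biUnion X))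
    {Y : Finset α} (hY : #Y < k) : #{i | X i ⊆ Y} ≤ #Y := by
  by_contra! hmany
  obtain ⟨J, hJ, hJcard⟩ := exists_subset_card_eq (s := {i | X i ⊆ Y}) hmany
  have hunion : J.biUnion X ⊆ Y :=
    biUnion_subset.2 fun i hi => (mem_filter.1 (hJ hi)).2
  have := hHall J (by omega) (by omega)
  have := card_le_card hunion
  omega

theorem card_mul_choose_le_of_forall_card_filter_subset_le {ι α : Type*} [Fintype ι]
    [Fintype α] [DecidableEq α] {X : ι → Finset α} {c K : ℕ}
    (huni : ∀ i, #(X i) = c) (hcK : c ≤ K)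
    (hK : ∀ Y : Finset α, #Y = K → #{i | X i ⊆ Y} ≤ K) :
    Fintype.card ι * (Fintype.card α - c).choose (K - c) ≤ (Fintype.card α).choose K * K := by
  simpa using card_mul_le_card_mul (fun i Y => X i ⊆ Y) (s := univ) (t := univ.powersetCard K)
    (fun i _ => by
      rw [bipartiteAbove, card_filter_powersetCard_subset _ _ _ (subset_univ _) (huni i ▸ hcK),
        huni, card_univ])
    (fun Y hY => by
      rw [bipartiteBelow]
      exact hK Y (mem_powersetCard.1 hY).2)

/-- Upper bound on the number of items of a `c`-uniform (n, cn, k, m)-CBC: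
if every member has cardinality exactly `c` (with `1 ≤ c ≤ k-1 ≤ m-1`), then
`n·C(k-1, c) ≤ (k-1)·C(m, c)`. -/
theorem uniform_cbc_bound (n k m c : ℕ) (hc : 1 ≤ c) (hck : c ≤ k - 1) (hkm : k - 1 ≤ m - 1)
    (X : Fin n → Finset (Fin m))
    (huni : ∀ t, (X t).card = c)
    (hHall : ∀ J : Finset (Fin n), 1 ≤ J.card → J.card ≤ k →
        J.card ≤ (J.biUnion X).card) :
    n * Nat.choose (k - 1) c ≤ (k - 1) * Nat.choose m c := by
  set K := k - 1
  have hcount : n * (m - c).choose (K - c) ≤ m.choose K * K := by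
    simpa using card_mul_choose_le_of_forall_card_filter_subset_le huni hck fun Y hY =>
      hY ▸ card_filter_subset_le_of_restricted_hall hHall (by omega)
  refine Nat.le_of_mul_le_mul_right ?_ (Nat.choose_pos (by omega : K - c ≤ m - c))
  calc n * K.choose c * (m - c).choose (K - c)
      = n * (m - c).choose (K - c) * K.choose c := by ring
    _ ≤ m.choose K * K * K.choose c := by gcongr
    _ = K * m.choose c * (m - c).choose (K - c) := by
      rw [mul_right_comm, Nat.choose_mul hck]; ring
end

section
/- Let c, k, m, i be integers with 1 ≤ c < k ≤ m and 0 ≤ i ≤ k−1. Then, as rational numbers, C(m−i, k−1−i) / C(m−c, k−1−c) − 1 ≥ (m−k+1)(c−i)/(k−c), where C(a,b) denotes the binomial coefficient (note that c−i may be negative, in which case the right-hand side is negative). -/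
/-!
Put `R = m - k + 1`, `n = m - c`, `j = m - i`. By symmetry both binomial coefficients have lower
index `R`, so the claim compares `C(j, R)` with `C(n, R)`. Since `C(a + 1, R) - C(a, R) = C(a, R - 1)`
is nondecreasing in `a`, the map `a ↦ C(a, R)` is convex, hence lies above its forward-difference
tangent at `n`: `C(j, R) ≥ C(n, R) + (j - n) C(n, R - 1)`. Finally
`C(n, R - 1) = C(n, R) R / (n - R + 1)` with `n - R + 1 = k - c` and `j - n = c - i`.
-/

namespace Nat

theorem choose_succ_add_mul_le (a d r : ℕ) :
    a.choose (r + 1) + d * a.choose r ≤ (a + d).choose (r + 1) := by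
  induction d with
  | zero => simp
  | succ d ih =>
    have hmono : a.choose r ≤ (a + d).choose r := choose_le_choose r (le_add_right a d)
    rw [← add_assoc, choose_succ_succ']
    linarith

theorem choose_add_succ_le_add_mul (a d r : ℕ) :
    (a + d).choose (r + 1) ≤ a.choose (r + 1) + d * (a + d).choose r := by
  induction d with
  | zero => simp
  | succ d ih =>
    have hmono : (a + d).choose r ≤ (a + d + 1).choose r := choose_le_choose r (le_succ _)
    rw [← add_assoc, choose_succ_succ']
    nlinarith

theorem choose_succ_add_sub_mul_le (n j r : ℕ) :
    (n.choose (r + 1) : ℤ) + ((j : ℤ) - n) * n.choose r ≤ j.choose (r + 1) := by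
  rcases le_total n j with hnj | hjn
  · obtain ⟨d, rfl⟩ := exists_add_of_le hnj
    have h := choose_succ_add_mul_le n d r
    zify at h
    push_cast
    linarith
  · obtain ⟨d, rfl⟩ := exists_add_of_le hjn
    have h := choose_add_succ_le_add_mul j d r
    zify at h
    push_cast
    linarith

end Nat

theorem choose_ratio_ineq_general (c k m i : ℕ) (hck : c < k) (hkm : k ≤ m)
    (hik : i ≤ k - 1) :
    (Nat.choose (m - i) (k - 1 - i) : ℚ) / (Nat.choose (m - c) (k - 1 - c) : ℚ) - 1
      ≥ ((m : ℚ) - k + 1) * ((c : ℚ) - i) / ((k : ℚ) - c) := by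
  have hsym_i : (m - i).choose (k - 1 - i) = (m - i).choose (m - k + 1) :=
    Nat.choose_symm_of_eq_add (by omega)
  have hsym_c : (m - c).choose (k - 1 - c) = (m - c).choose (m - k + 1) :=
    Nat.choose_symm_of_eq_add (by omega)
  have hpos : (0 : ℚ) < (m - c).choose (m - k + 1) := by
    exact_mod_cast Nat.choose_pos (by omega)
  have htangent : ((m - c).choose (m - k + 1) : ℚ) + ((c : ℚ) - i) * (m - c).choose (m - k)
      ≤ (m - i).choose (m - k + 1) := by
    have h := Nat.choose_succ_add_sub_mul_le (m - c) (m - i) (m - k)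
    have hji : ((m - i : ℕ) : ℤ) - (m - c : ℕ) = (c : ℤ) - i := by omega
    rw [hji] at h
    exact_mod_cast h
  have hslope : ((m - c).choose (m - k) : ℚ) * ((k : ℚ) - c)
      = (m - c).choose (m - k + 1) * ((m : ℚ) - k + 1) := by
    have h := Nat.choose_succ_right_eq (m - c) (m - k)
    rw [show m - c - (m - k) = k - c by omega] at h
    have h' : (((m - c).choose (m - k + 1) * (m - k + 1) : ℕ) : ℚ)
        = (((m - c).choose (m - k) * (k - c) : ℕ) : ℚ) := congrArg _ h
    push_cast [Nat.cast_sub hkm, Nat.cast_sub hck.le] at h'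
    linarith
  have hkc : (0 : ℚ) < (k : ℚ) - c := sub_pos.mpr (by exact_mod_cast hck)
  rw [hsym_i, hsym_c, ge_iff_le, div_sub_one hpos.ne']
  calc ((m : ℚ) - k + 1) * ((c : ℚ) - i) / ((k : ℚ) - c)
      = ((c : ℚ) - i) * (m - c).choose (m - k) / (m - c).choose (m - k + 1) := by
        field_simp
        linear_combination ((i : ℚ) - c) * hslope
    _ ≤ _ := by gcongr; linarith

/-- For integers `1 ≤ c < k ≤ m` and `0 ≤ i ≤ k-1`, as rational numbers,
`C(m-i, k-1-i)/C(m-c, k-1-c) - 1 ≥ (m-k+1)(c-i)/(k-c)`. -/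
theorem choose_ratio_ineq (c k m i : ℕ) (hc : 1 ≤ c) (hck : c < k) (hkm : k ≤ m)
    (hik : i ≤ k - 1) :
    (Nat.choose (m - i) (k - 1 - i) : ℚ) / (Nat.choose (m - c) (k - 1 - c) : ℚ) - 1
      ≥ ((m : ℚ) - k + 1) * ((c : ℚ) - i) / ((k : ℚ) - c) :=
  choose_ratio_ineq_general c k m i hck hkm hik
end

section
/- Let (S,X) be an (n,N,k,m)-CBC with m ≥ k ≥ 2, in which every member X_i has cardinality at most k, let 1 ≤ c ≤ k−1, let A_k be the number of indices i with |X_i| = k, and set U_{m,k,c} = (k−1)·C(m,c)/C(k−1,c) (a rational number). Then N ≥ n·c − (k−c)(U_{m,k,c} − n)/(m−k+1) + (k−c)(m−k)·A_k/(m−k+1), as an inequality between rational numbers. -/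
/-!
Only members of size `d < k` need an argument. By the restricted Hall condition a `(k-1)`-subset
of `S` contains at most `k-1` members, so double counting the pairs `X_t ⊆ W` gives
`∑_{|X_t| < k} C(m-d_t, k-1-d_t) ≤ (k-1) C(m, k-1)`. The sequence `d ↦ C(m-d, k-1-d)` is
convex, hence bounded below by its secant through `d = c - 1` and `d = c`, an affine function
of `d`. Summing that bound turns the count into a lower bound on `∑ d_t`, and
`C(m, k-1) / C(m-c, k-1-c) = C(m, c) / C(k-1, c)` turns its right side into `U_{m,k,c}`.
-/

open Finset

section Convexity

variable {R : Type*} [CommRing R] [LinearOrder R] [IsStrictOrderedRing R]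

theorem secant_le_of_monotone_sub {g : ℕ → R} (hg : Monotone fun i => g (i + 1) - g i)
    (s₀ s : ℕ) : g s₀ + ((s : R) - s₀) * (g (s₀ + 1) - g s₀) ≤ g s := by
  rcases le_total s₀ s with hs | hs
  · induction s, hs using Nat.le_induction with
    | base => simp
    | succ s hs ih =>
      have := hg hs
      push_cast
      linarith
  · refine Nat.decreasingInduction
      (motive := fun j _ => g s₀ + ((j : R) - s₀) * (g (s₀ + 1) - g s₀) ≤ g j)
      (fun j hj ih => ?_) (by simp) hs
    have := hg hj.le
    push_cast at ih
    linarith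

end Convexity

theorem monotone_choose_add_succ (a : ℕ) : Monotone fun s => (a + s).choose (s + 1) :=
  monotone_nat_of_le_succ fun s => by
    rw [show a + (s + 1) = a + s + 1 by ring, Nat.choose_succ_succ]
    exact Nat.le_add_right _ _

theorem choose_add_mul_le (a s₀ s : ℕ) :
    ((a + s₀).choose s₀ : ℚ) * ((s₀ + 1) + a * ((s : ℚ) - s₀))
      ≤ (s₀ + 1) * (a + s).choose s := by
  have hdiff : ∀ i,
      ((a + (i + 1)).choose (i + 1) : ℚ) - (a + i).choose i = (a + i).choose (i + 1) := by
    intro i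
    rw [show a + (i + 1) = a + i + 1 by ring, Nat.choose_succ_succ]
    push_cast; ring
  have hslope : ((a + s₀).choose (s₀ + 1) : ℚ) * (s₀ + 1) = (a + s₀).choose s₀ * a := by
    exact_mod_cast (Nat.choose_succ_right_eq (a + s₀) s₀).trans (by rw [Nat.add_sub_cancel])
  have hsec := secant_le_of_monotone_sub (g := fun i => ((a + i).choose i : ℚ))
    (by simp only [hdiff]; exact fun i j hij => Nat.cast_le.2 (monotone_choose_add_succ a hij))
    s₀ s
  simp only [hdiff] at hsec
  have := mul_le_mul_of_nonneg_left hsec (by positivity : (0 : ℚ) ≤ s₀ + 1)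
  linear_combination this - ((s : ℚ) - s₀) * hslope

theorem choose_sub_mul_le {m k c d : ℕ} (hc : c < k) (hd : d < k) (hkm : k ≤ m + 1) :
    ((m - c).choose (k - 1 - c) : ℚ) * ((k - c) + (m - k + 1) * ((c : ℚ) - d))
      ≤ (k - c) * (m - d).choose (k - 1 - d) := by
  obtain ⟨s₀, rfl⟩ : ∃ s₀, k = c + s₀ + 1 := ⟨k - c - 1, by omega⟩
  obtain ⟨a, rfl⟩ : ∃ a, m = a + c + s₀ := ⟨m - c - s₀, by omega⟩
  obtain ⟨s, hs⟩ : ∃ s, c + s₀ = d + s := ⟨c + s₀ - d, by omega⟩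
  have key := choose_add_mul_le a s₀ s
  rw [show a + c + s₀ - c = a + s₀ by omega, show c + s₀ + 1 - 1 - c = s₀ by omega,
    show a + c + s₀ - d = a + s by omega, show c + s₀ + 1 - 1 - d = s by omega]
  have hk : ((c + s₀ + 1 : ℕ) : ℚ) - c = s₀ + 1 := by push_cast; ring
  have hm : ((a + c + s₀ : ℕ) : ℚ) - (c + s₀ + 1 : ℕ) + 1 = a := by push_cast; ring
  have hcd : (c : ℚ) - d = s - s₀ := by
    linear_combination (by exact_mod_cast hs : (c : ℚ) + s₀ = d + s)
  rwa [hk, hm, hcd]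

def RestrictedHall {ι α : Type*} [DecidableEq α] (X : ι → Finset α) (k : ℕ) : Prop :=
  ∀ J : Finset ι, 1 ≤ #J → #J ≤ k → #J ≤ #(J.biUnion X)

namespace RestrictedHall

variable {ι α : Type*} [DecidableEq α] {X : ι → Finset α} {k : ℕ}

theorem card_filter_subset_le (hX : RestrictedHall X k) (s : Finset ι) {W : Finset α}
    (hW : #W < k) : #{t ∈ s | X t ⊆ W} ≤ #W := by
  by_contra! hlt
  obtain ⟨J, hJs, hJ⟩ := exists_subset_card_eq (Nat.succ_le_of_lt hlt)
  have hJW : J.biUnion X ⊆ W := biUnion_subset.2 fun t ht => (mem_filter.1 (hJs ht)).2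
  have := hX J (by omega) (by omega)
  have := card_le_card hJW
  omega

theorem sum_card_supersets_le [Fintype α] (hX : RestrictedHall X k) (s : Finset ι) {r : ℕ}
    (hr : r < k) :
    ∑ t ∈ s, #{W ∈ powersetCard r univ | X t ⊆ W} ≤ (Fintype.card α).choose r * r :=
  calc ∑ t ∈ s, #{W ∈ powersetCard r univ | X t ⊆ W}
      = ∑ W ∈ powersetCard r univ, #{t ∈ s | X t ⊆ W} :=
        sum_card_bipartiteAbove_eq_sum_card_bipartiteBelow _
    _ ≤ #(powersetCard r (univ : Finset α)) • r := sum_le_card_nsmul _ _ _ fun W hW => by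
        rw [mem_powersetCard_univ] at hW
        exact hW ▸ hX.card_filter_subset_le s (hW ▸ hr)
    _ = (Fintype.card α).choose r * r := by simp

theorem sum_add_mul_sub_card_le [Fintype α] (hX : RestrictedHall X k) {c : ℕ} (hc : c < k)
    (hk : k ≤ Fintype.card α + 1) (s : Finset ι) (hs : ∀ t ∈ s, #(X t) < k) :
    ∑ t ∈ s, (((k : ℚ) - c) + ((Fintype.card α : ℚ) - k + 1) * ((c : ℚ) - #(X t)))
      ≤ ((k : ℚ) - c) * (((k : ℚ) - 1) * ((Fintype.card α).choose c : ℚ)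
          / ((k - 1).choose c : ℚ)) := by
  set m := Fintype.card α
  set Q : ℚ := ↑((m - c).choose (k - 1 - c)) with hQ_def
  have hQ : 0 < Q := by rw [hQ_def]; exact_mod_cast Nat.choose_pos (by omega)
  have hB : ((k - 1).choose c : ℚ) ≠ 0 := by exact_mod_cast (Nat.choose_pos (by omega)).ne'
  have hcount :
      ∑ t ∈ s, ((m - #(X t)).choose (k - 1 - #(X t)) : ℚ) ≤ m.choose (k - 1) * (k - 1) := by
    have := hX.sum_card_supersets_le s (r := k - 1) (by omega)
    rw [sum_congr rfl fun t ht => card_filter_powersetCard_subset (X t) univ (k - 1)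
      (subset_univ _) (by have := hs t ht; omega)] at this
    rw [← Nat.cast_pred (by omega)]
    exact_mod_cast this
  have hid : (m.choose (k - 1) : ℚ) * (k - 1).choose c = m.choose c * Q := by
    rw [hQ_def]; exact_mod_cast Nat.choose_mul (n := m) (by omega : c ≤ k - 1)
  refine le_of_mul_le_mul_left ?_ hQ
  calc Q * ∑ t ∈ s, (((k : ℚ) - c) + ((m : ℚ) - k + 1) * ((c : ℚ) - #(X t)))
      = ∑ t ∈ s, Q * (((k : ℚ) - c) + ((m : ℚ) - k + 1) * ((c : ℚ) - #(X t))) :=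
        mul_sum _ _ _
    _ ≤ ∑ t ∈ s, ((k : ℚ) - c) * (m - #(X t)).choose (k - 1 - #(X t)) :=
        sum_le_sum fun t ht => choose_sub_mul_le hc (hs t ht) hk
    _ = ((k : ℚ) - c) * ∑ t ∈ s, ((m - #(X t)).choose (k - 1 - #(X t)) : ℚ) :=
        (mul_sum _ _ _).symm
    _ ≤ ((k : ℚ) - c) * (m.choose (k - 1) * (k - 1)) :=
        mul_le_mul_of_nonneg_left hcount (by rw [sub_nonneg]; exact_mod_cast hc.le)
    _ = Q * ((k - c : ℚ) * ((k - 1 : ℚ) * m.choose c / (k - 1).choose c)) := by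
        field_simp
        linear_combination ((k : ℚ) - c) * (k - 1) * hid

end RestrictedHall

theorem cbc_storage_lower_bound_general (n N k m c : ℕ) (hkm : k ≤ m)
    (hc1 : 1 ≤ c) (hc2 : c ≤ k - 1)
    (X : Fin n → Finset (Fin m))
    (hN : ∑ t, (X t).card = N)
    (hcard : ∀ t, (X t).card ≤ k)
    (hHall : ∀ J : Finset (Fin n), 1 ≤ J.card → J.card ≤ k →
        J.card ≤ (J.biUnion X).card) :
    (N : ℚ) ≥ (n : ℚ) * c
      - ((k : ℚ) - c) * (((k : ℚ) - 1) * (Nat.choose m c : ℚ) / (Nat.choose (k - 1) c : ℚ)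
          - n) / ((m : ℚ) - k + 1)
      + ((k : ℚ) - c) * ((m : ℚ) - k)
          * ((Finset.univ.filter (fun t => (X t).card = k)).card : ℚ)
          / ((m : ℚ) - k + 1) := by
  have hck : c < k :=
    Nat.lt_of_le_sub_one ((Nat.lt_of_lt_of_le hc1 hc2).trans_le (Nat.sub_le k 1)) hc2
  have ha : (0 : ℚ) < m - k + 1 := by
    have : (k : ℚ) ≤ m := by exact_mod_cast hkm
    linarith
  set a : ℚ := m - k + 1
  set U : ℚ := ((k : ℚ) - 1) * (Nat.choose m c : ℚ) / (Nat.choose (k - 1) c : ℚ)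
  set φ : ℕ → ℚ := fun d => ((k : ℚ) - c) + a * ((c : ℚ) - d)
  have hnonfull : ∑ t with #(X t) ≠ k, φ #(X t) ≤ ((k : ℚ) - c) * U := by
    simpa only [Fintype.card_fin] using RestrictedHall.sum_add_mul_sub_card_le hHall hck
      (by simpa using hkm.trans m.le_succ) {t | #(X t) ≠ k}
      fun t ht => lt_of_le_of_ne (hcard t) (mem_filter.1 ht).2
  have hfull : ∑ t with #(X t) = k, φ #(X t) = -((k - c) * (m - k) * #{t | #(X t) = k}) := by
    rw [sum_congr rfl fun t ht => by rw [(mem_filter.1 ht).2], sum_const, nsmul_eq_mul]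
    ring
  have htotal : ∑ t, φ #(X t) = n * ((k - c) + a * c) - a * N := by
    simp only [φ, ← hN, sum_add_distrib, ← mul_sum, sum_sub_distrib, sum_const, card_univ,
      Fintype.card_fin, nsmul_eq_mul]
    push_cast
    ring
  rw [← sum_filter_add_sum_filter_not univ (fun t => #(X t) = k), hfull] at htotal
  rw [ge_iff_le, ← sub_nonneg, show (N : ℚ) - (n * c - (k - c) * (U - n) / a
      + (k - c) * (m - k) * #{t | #(X t) = k} / a)
      = ((k - c) * U - ∑ t with #(X t) ≠ k, φ #(X t)) / a by
    field_simp
    linear_combination htotal]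
  exact div_nonneg (by linarith) ha.le

/-- Lower bound on the total storage `N` of an (n,N,k,m)-CBC whose members all have
cardinality at most `k`: for `1 ≤ c ≤ k-1`,
`N ≥ n·c - (k-c)(U_{m,k,c} - n)/(m-k+1) + (k-c)(m-k)·A_k/(m-k+1)`,
where `U_{m,k,c} = (k-1)·C(m,c)/C(k-1,c)` and `A_k` is the number of members of
cardinality exactly `k`. -/
theorem cbc_storage_lower_bound (n N k m c : ℕ) (hk : 2 ≤ k) (hkm : k ≤ m)
    (hc1 : 1 ≤ c) (hc2 : c ≤ k - 1)
    (X : Fin n → Finset (Fin m))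
    (hN : ∑ t, (X t).card = N)
    (hcard : ∀ t, (X t).card ≤ k)
    (hHall : ∀ J : Finset (Fin n), 1 ≤ J.card → J.card ≤ k →
        J.card ≤ (J.biUnion X).card) :
    (N : ℚ) ≥ (n : ℚ) * c
      - ((k : ℚ) - c) * (((k : ℚ) - 1) * (Nat.choose m c : ℚ) / (Nat.choose (k - 1) c : ℚ)
          - n) / ((m : ℚ) - k + 1)
      + ((k : ℚ) - c) * ((m : ℚ) - k)
          * ((Finset.univ.filter (fun t => (X t).card = k)).card : ℚ)
          / ((m : ℚ) - k + 1) :=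
  cbc_storage_lower_bound_general n N k m c hkm hc1 hc2 X hN hcard hHall
end

section
/- Let m ≥ k ≥ 2 be integers, let 1 ≤ n ≤ (k−1)·C(m, k−1), and let c be the least integer with 1 ≤ c ≤ k−1 such that n ≤ U_{m,k,c}. Then every (n,N,k,m)-CBC satisfies N ≥ n·c − ⌊(k−c)(U_{m,k,c} − n)/(m−k+1)⌋; in particular N(n,k,m) ≥ n·c − ⌊(k−c)(U_{m,k,c} − n)/(m−k+1)⌋, where the floor is taken of the rational number (k−c)(U_{m,k,c} − n)/(m−k+1). -/
/-- `batchU m k c` is the rational number `U_{m,k,c} = (k-1)·C(m,c)/C(k-1,c)`. -/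
def batchU (m k c : ℕ) : ℚ :=
  ((k : ℚ) - 1) * (Nat.choose m c : ℚ) / (Nat.choose (k - 1) c : ℚ)

/-!
Put `r = m - k + 1`. By the Hall condition, at most `k - 1` of the sets avoid a given `r`-set
`Z` (they all lie in the `(k-1)`-set `Zᶜ`), while a set of size `s` avoids exactly `C(m - s, r)`
of the `r`-sets. Double counting gives `∑ᵢ C(m - |Xᵢ|, r) ≤ (k - 1)·C(m, k - 1)`. Since
`t ↦ C(t, r)` is convex, it lies above its secant line through `m - c` and `m - c + 1`; summing
that linear bound over the `Xᵢ` turns the double-counting inequality into a linear inequality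
between `N` and `n`, which is the claimed bound once `C(m - c, r)` is cancelled using
`U_{m,k,c}·C(m - c, r) = (k - 1)·C(m, k - 1)`.
-/

open Finset

theorem Nat.choose_add_mul_sub_le_choose (a t r : ℕ) :
    (a.choose (r + 1) : ℤ) + ((t : ℤ) - a) * a.choose r ≤ t.choose (r + 1) := by
  rcases le_total a t with hat | hta
  · induction t, hat using Nat.le_induction with
    | base => simp
    | succ t hat ih =>
      have hmono : (a.choose r : ℤ) ≤ t.choose r := by exact_mod_cast Nat.choose_le_choose r hat
      rw [Nat.choose_succ_succ', Nat.cast_add]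
      push_cast
      linarith
  · induction a, hta using Nat.le_induction with
    | base => simp
    | succ a hta ih =>
      have hmono : (a.choose r : ℤ) ≤ (a + 1).choose r := by
        exact_mod_cast Nat.choose_le_succ a r
      have hta' : (0 : ℤ) ≤ a + 1 - t := by
        linarith [(by exact_mod_cast hta : (t : ℤ) ≤ a)]
      rw [Nat.choose_succ_succ', Nat.cast_add]
      push_cast
      nlinarith [mul_le_mul_of_nonneg_left hmono hta']

theorem batchU_mul_choose {m k c : ℕ} (hk : 1 ≤ k) (hkm : k ≤ m) (hc : c ≤ k - 1) :
    batchU m k c * (m - c).choose (m - k + 1) = (k - 1) * m.choose (k - 1) := by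
  have hchoose : (m.choose (k - 1) * (k - 1).choose c : ℚ)
      = m.choose c * (m - c).choose (m - k + 1) := by
    rw [Nat.choose_symm_of_eq_add (show m - c = (m - k + 1) + (k - 1 - c) by omega)]
    exact_mod_cast Nat.choose_mul hc
  have hpos : ((k - 1).choose c : ℚ) ≠ 0 := by exact_mod_cast (Nat.choose_pos hc).ne'
  unfold batchU
  field_simp
  linear_combination ((k : ℚ) - 1) * hchoose.symm

section SetSystem

variable {ι α : Type*} [Fintype ι] [DecidableEq α] {X : ι → Finset α} {k : ℕ}

theorem card_filter_subset_lt_of_hall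
    (hHall : ∀ J : Finset ι, #J = k → k ≤ #(J.biUnion X)) {Y : Finset α} (hY : #Y < k) :
    #{i | X i ⊆ Y} < k := by
  by_contra! hbig
  obtain ⟨J, hJ, hJk⟩ := exists_subset_card_eq hbig
  have hJY : J.biUnion X ⊆ Y := biUnion_subset.mpr fun i hi => (mem_filter.mp (hJ hi)).2
  have := card_le_card hJY
  have := hHall J hJk
  omega

variable [Fintype α]

theorem card_filter_powersetCard_univ_disjoint (A : Finset α) (r : ℕ) :
    #{Z ∈ powersetCard r (univ : Finset α) | Disjoint A Z}
      = (Fintype.card α - #A).choose r := by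
  have h : {Z ∈ powersetCard r (univ : Finset α) | Disjoint A Z} = powersetCard r Aᶜ := by
    ext Z
    simp [subset_compl_iff_disjoint_left, and_comm]
  rw [h, card_powersetCard, card_compl]

theorem sum_choose_card_compl_le_of_hall
    (hHall : ∀ J : Finset ι, #J = k → k ≤ #(J.biUnion X)) {r : ℕ}
    (hr : Fintype.card α - r < k) :
    ∑ i, (Fintype.card α - #(X i)).choose r ≤ (k - 1) * (Fintype.card α).choose r := by
  calc ∑ i, (Fintype.card α - #(X i)).choose r
      = ∑ i, #((powersetCard r univ).bipartiteAbove (fun i Z => Disjoint (X i) Z) i) := by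
        simp only [bipartiteAbove, card_filter_powersetCard_univ_disjoint]
    _ = ∑ Z ∈ powersetCard r univ, #(univ.bipartiteBelow (fun i Z => Disjoint (X i) Z) Z) :=
        sum_card_bipartiteAbove_eq_sum_card_bipartiteBelow _
    _ ≤ ∑ Z ∈ powersetCard r (univ : Finset α), (k - 1) := by
        refine sum_le_sum fun Z hZ => ?_
        have hZc : #Zᶜ < k := by
          rw [card_compl, (mem_powersetCard.mp hZ).2]; exact hr
        have := card_filter_subset_lt_of_hall hHall hZc
        simp only [bipartiteBelow, ← subset_compl_iff_disjoint_right]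
        omega
    _ = (k - 1) * (Fintype.card α).choose r := by
        rw [sum_const, card_powersetCard, card_univ, smul_eq_mul, mul_comm]

theorem sum_card_bound_of_hall (hHall : ∀ J : Finset ι, #J = k → k ≤ #(J.biUnion X))
    {m : ℕ} (hm : Fintype.card α = m) (hk : 1 ≤ k) (hkm : k ≤ m) {c : ℕ} (hc : c ≤ m) :
    (Fintype.card ι : ℤ) * (m - c).choose (m - k + 1)
        + (Fintype.card ι * c - ∑ i, #(X i)) * (m - c).choose (m - k)
      ≤ (k - 1) * m.choose (k - 1) := by
  have hcount := sum_choose_card_compl_le_of_hall (X := X) hHall (r := m - k + 1) (by omega)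
  rw [hm, Nat.choose_symm_of_eq_add (show m = (m - k + 1) + (k - 1) by omega)] at hcount
  have htangent (i : ι) :
      ((m - c).choose (m - k + 1) : ℤ) + (c - #(X i)) * (m - c).choose (m - k)
        ≤ (m - #(X i)).choose (m - k + 1) := by
    have hXi : #(X i) ≤ m := hm ▸ card_le_univ _
    have := Nat.choose_add_mul_sub_le_choose (m - c) (m - #(X i)) (m - k)
    rwa [Nat.cast_sub hXi, Nat.cast_sub hc, sub_sub_sub_cancel_left] at this
  calc (Fintype.card ι : ℤ) * (m - c).choose (m - k + 1)
        + (Fintype.card ι * c - ∑ i, #(X i)) * (m - c).choose (m - k)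
      = ∑ i, (((m - c).choose (m - k + 1) : ℤ) + (c - #(X i)) * (m - c).choose (m - k)) := by
        simp only [sum_add_distrib, ← sum_mul, sum_sub_distrib, sum_const, card_univ,
          nsmul_eq_mul]
        push_cast; ring
    _ ≤ ∑ i, ((m - #(X i)).choose (m - k + 1) : ℤ) := sum_le_sum fun i _ => htangent i
    _ ≤ (k - 1) * m.choose (k - 1) := by
        have hk1 : ((k - 1 : ℕ) : ℤ) = k - 1 := by omega
        rw [← hk1]
        exact_mod_cast hcount

theorem sub_mul_le_batchU_of_hall (hHall : ∀ J : Finset ι, #J = k → k ≤ #(J.biUnion X))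
    {m c : ℕ} (hm : Fintype.card α = m) (hk : 1 ≤ k) (hkm : k ≤ m) (hc : c ≤ k - 1) :
    ((Fintype.card ι : ℚ) * c - ∑ i, #(X i)) * (m - k + 1)
      ≤ (k - c) * (batchU m k c - Fintype.card ι) := by
  have hbound := sum_card_bound_of_hall hHall hm hk hkm (c := c) (by omega)
  have hU := batchU_mul_choose hk hkm hc
  set n := Fintype.card ι
  set B := (m - c).choose (m - k + 1)
  set A := (m - c).choose (m - k)
  have hB : (0 : ℚ) < B := by exact_mod_cast Nat.choose_pos (by omega)
  have hAB : ((m : ℚ) - k + 1) * B = (k - c) * A := by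
    have := Nat.choose_succ_right_eq (m - c) (m - k)
    rw [show m - c - (m - k) = k - c by omega] at this
    qify [hkm, show c ≤ k by omega] at this
    linarith
  have hboundQ : (n : ℚ) * B + (n * c - ∑ i, #(X i)) * A ≤ batchU m k c * B := by
    rw [hU]; exact_mod_cast hbound
  have hkc : (0 : ℚ) ≤ k - c := sub_nonneg.mpr (by exact_mod_cast (show c ≤ k by omega))
  refine le_of_mul_le_mul_right ?_ hB
  calc ((n : ℚ) * c - ∑ i, #(X i)) * (m - k + 1) * B
      = (k - c) * ((n * c - ∑ i, #(X i)) * A) := by rw [mul_assoc, hAB]; ring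
    _ ≤ (k - c) * ((batchU m k c - n) * B) := mul_le_mul_of_nonneg_left (by linarith) hkc
    _ = (k - c) * (batchU m k c - n) * B := by ring

end SetSystem

theorem cbc_lower_bound_general (n k m c : ℕ) (hk : 2 ≤ k) (hkm : k ≤ m)
    (hc2 : c ≤ k - 1)
    (N : ℕ) (X : Fin n → Finset (Fin m))
    (hN : ∑ t, (X t).card = N)
    (hHall : ∀ J : Finset (Fin n), 1 ≤ J.card → J.card ≤ k →
        J.card ≤ (J.biUnion X).card) :
    (N : ℤ) ≥ (n : ℤ) * c
      - ⌊((k : ℚ) - c) * (batchU m k c - n) / ((m : ℚ) - k + 1)⌋ := by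
  have hbound := sub_mul_le_batchU_of_hall (fun J hJ => hJ ▸ hHall J (by omega) hJ.le)
    (Fintype.card_fin m) (by omega) hkm hc2
  rw [Fintype.card_fin, hN] at hbound
  have hmk : (0 : ℚ) < m - k + 1 := by
    linarith [(by exact_mod_cast hkm : (k : ℚ) ≤ m)]
  rw [ge_iff_le, sub_le_comm, Int.le_floor, le_div_iff₀ hmk]
  push_cast
  exact hbound

/-- Lower bound on the total storage of any (n,N,k,m)-CBC: for `m ≥ k ≥ 2` and
`1 ≤ n ≤ (k-1)·C(m,k-1)`, if `c` is least with `1 ≤ c ≤ k-1` and `n ≤ U_{m,k,c}`, then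
`N ≥ n·c - ⌊(k-c)(U_{m,k,c} - n)/(m-k+1)⌋`. -/
theorem cbc_lower_bound (n k m c : ℕ) (hk : 2 ≤ k) (hkm : k ≤ m)
    (hn1 : 1 ≤ n) (hn2 : n ≤ (k - 1) * Nat.choose m (k - 1))
    (hc1 : 1 ≤ c) (hc2 : c ≤ k - 1) (hcU : (n : ℚ) ≤ batchU m k c)
    (hleast : ∀ c', 1 ≤ c' → c' < c → ¬ ((n : ℚ) ≤ batchU m k c'))
    (N : ℕ) (X : Fin n → Finset (Fin m))
    (hN : ∑ t, (X t).card = N)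
    (hHall : ∀ J : Finset (Fin n), 1 ≤ J.card → J.card ≤ k →
        J.card ≤ (J.biUnion X).card) :
    (N : ℤ) ≥ (n : ℤ) * c
      - ⌊((k : ℚ) - c) * (batchU m k c - n) / ((m : ℚ) - k + 1)⌋ :=
  cbc_lower_bound_general n k m c hk hkm hc2 N X hN hHall
end

section
/- Let m ≥ k ≥ 3 be integers and let n satisfy C(m, k−2) ≤ n ≤ (k−1)·C(m, k−1). Then there exists an (n,N,k,m)-CBC with N = n(k−1) − ⌊((k−1)·C(m,k−1) − n)/(m−k+1)⌋, in which every member of the collection is either a (k−1)-subset or a (k−2)-subset of S and the (k−2)-subsets occurring are pairwise distinct. -/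
/-!
Write `k = r + 2`. Take `q = ⌊((r+1)·C(m,r+1) - n)/(m-r-1)⌋` distinct `r`-sets `D`, and add every
`(r+1)`-set `U` as often as `r + 1 - #{d ∈ D | d ⊆ U}`. Since each `r`-set lies in `m - r` sets of
size `r + 1`, this saturated family has `(r+1)·C(m,r+1) - q(m-r) ≥ n - q` members of size `r + 1`,
and every `(r+1)`-set contains exactly `r + 1` of its members. Keep `D` and any `n - q` of the
others: a set `W` with `#W < k` then contains at most `#W` members (one if `#W = r`, none if
`#W < r`), which is Hall's condition for at most `k` indices.
-/

open Finset

theorem Multiset.exists_le_card_eq {β : Type*} {s : Multiset β} {n : ℕ} (h : n ≤ card s) :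
    ∃ t ≤ s, card t = n := by
  obtain ⟨t, ht⟩ := card_pos_iff_exists_mem.1 <| (card_powersetCard n s).symm ▸ Nat.choose_pos h
  exact ⟨t, mem_powersetCard.1 ht⟩

theorem Multiset.exists_map_univ_eq {β : Type*} {n : ℕ} (M : Multiset β) (hM : card M = n) :
    ∃ X : Fin n → β, univ.val.map X = M := by
  obtain ⟨l, rfl⟩ := Quotient.exists_rep M
  rw [Multiset.quot_mk_to_coe, coe_card] at hM
  subst hM
  exact ⟨l.get, by rw [Fin.univ_val_map, List.ofFn_get, Multiset.quot_mk_to_coe]⟩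

theorem card_filter_univ_eq_card_filter {ι β : Type*} [Fintype ι] {X : ι → β} {M : Multiset β}
    (hX : univ.val.map X = M) (p : β → Prop) [DecidablePred p] :
    #{t | p (X t)} = Multiset.card (M.filter p) := by
  rw [← hX, Multiset.filter_map, Multiset.card_map]
  rfl

section HallCondition

variable {ι α : Type*} [Fintype ι] [DecidableEq α] {X : ι → Finset α}

theorem card_le_card_biUnion_of_card_filter_subset_le {k : ℕ}
    (h : ∀ W : Finset α, #W < k → #{t | X t ⊆ W} ≤ #W) {J : Finset ι} (hJ : #J ≤ k) :
    #J ≤ #(J.biUnion X) := by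
  rcases lt_or_ge #(J.biUnion X) k with hlt | hge
  · calc #J ≤ #{t | X t ⊆ J.biUnion X} :=
          card_le_card fun t ht => mem_filter.2 ⟨mem_univ t, subset_biUnion_of_mem X ht⟩
      _ ≤ #(J.biUnion X) := h _ hlt
  · exact hJ.trans hge

theorem card_le_card_biUnion_of_sized {r : ℕ} (hr : 1 ≤ r) (hX : ∀ t, r ≤ #(X t))
    (h₀ : ∀ W : Finset α, #W = r → #{t | X t ⊆ W} ≤ 1)
    (h₁ : ∀ W : Finset α, #W = r + 1 → #{t | X t ⊆ W} ≤ r + 1)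
    {J : Finset ι} (hJ : #J ≤ r + 2) : #J ≤ #(J.biUnion X) := by
  refine card_le_card_biUnion_of_card_filter_subset_le (fun W hW => ?_) hJ
  rcases lt_trichotomy #W r with hlt | heq | hgt
  · have hempty : ∀ t, ¬ X t ⊆ W := fun t hsub => (card_le_card hsub).not_gt (hlt.trans_le (hX t))
    simp [hempty]
  · exact (h₀ W heq).trans (heq ▸ hr)
  · exact (h₁ W (by omega)).trans (by omega)

theorem ne_of_card_filter_subset_le_one {r : ℕ}
    (h₀ : ∀ W : Finset α, #W = r → #{t | X t ⊆ W} ≤ 1) {t s : ι} (hts : t ≠ s)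
    (ht : #(X t) = r) : X t ≠ X s :=
  fun heq => hts <| card_le_one.1 (h₀ _ ht) t (by simp) s (by simp [heq])

end HallCondition

section SaturatingFamily

variable {α : Type*} [Fintype α] [DecidableEq α] {r : ℕ} {D : Finset (Finset α)}

theorem card_filter_subset_le_of_card_eq_succ (hD : D ⊆ powersetCard r univ) {U : Finset α}
    (hU : #U = r + 1) : #{d ∈ D | d ⊆ U} ≤ r + 1 := by
  calc #{d ∈ D | d ⊆ U} ≤ #(powersetCard r U) := card_le_card fun d hd => by
        obtain ⟨hdD, hdU⟩ := mem_filter.1 hd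
        exact mem_powersetCard.2 ⟨hdU, (mem_powersetCard_univ.1 (hD hdD))⟩
    _ = r + 1 := by rw [card_powersetCard, hU, Nat.choose_succ_self_right]

theorem sum_card_filter_subset (hD : D ⊆ powersetCard r univ) :
    ∑ U ∈ powersetCard (r + 1) univ, #{d ∈ D | d ⊆ U} = #D * (Fintype.card α - r) := by
  calc ∑ U ∈ powersetCard (r + 1) univ, #{d ∈ D | d ⊆ U}
      = ∑ d ∈ D, #{U ∈ powersetCard (r + 1) univ | d ⊆ U} :=
        (sum_card_bipartiteAbove_eq_sum_card_bipartiteBelow (r := (· ⊆ ·)) (s := D)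
          (t := powersetCard (r + 1) univ)).symm
    _ = ∑ _d ∈ D, (Fintype.card α - r) := sum_congr rfl fun d hd => by
        have hd : #d = r := mem_powersetCard_univ.1 (hD hd)
        rw [card_filter_powersetCard_subset d univ (r + 1) (subset_univ d) (by omega), card_univ,
          hd, Nat.add_sub_cancel_left, Nat.choose_one_right]
    _ = #D * (Fintype.card α - r) := by rw [sum_const, smul_eq_mul]

variable (r D) in
def saturatingFamily : Multiset (Finset α) :=
  ∑ U ∈ powersetCard (r + 1) univ, Multiset.replicate (r + 1 - #{d ∈ D | d ⊆ U}) U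

theorem card_of_mem_saturatingFamily {V : Finset α} (hV : V ∈ saturatingFamily r D) :
    #V = r + 1 := by
  obtain ⟨U, hU, hVU⟩ := Multiset.mem_sum.1 hV
  rw [Multiset.eq_of_mem_replicate hVU]
  exact mem_powersetCard_univ.1 hU

theorem count_saturatingFamily_add (hD : D ⊆ powersetCard r univ) {W : Finset α}
    (hW : #W = r + 1) :
    (saturatingFamily r D).count W + #{d ∈ D | d ⊆ W} = r + 1 := by
  rw [saturatingFamily, Multiset.count_sum']
  simp only [Multiset.count_replicate]
  rw [sum_ite_eq', if_pos (mem_powersetCard_univ.2 hW),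
    Nat.sub_add_cancel (card_filter_subset_le_of_card_eq_succ hD hW)]

theorem card_saturatingFamily_add (hD : D ⊆ powersetCard r univ) :
    Multiset.card (saturatingFamily r D) + #D * (Fintype.card α - r) =
      (r + 1) * (Fintype.card α).choose (r + 1) := by
  rw [saturatingFamily, Multiset.card_sum, ← sum_card_filter_subset hD, ← sum_add_distrib]
  simp only [Multiset.card_replicate]
  rw [sum_congr rfl fun U hU =>
      Nat.sub_add_cancel (card_filter_subset_le_of_card_eq_succ hD (mem_powersetCard_univ.1 hU)),
    sum_const, card_powersetCard, card_univ, smul_eq_mul, mul_comm]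

theorem card_filter_subset_le_one_of_le_saturatingFamily (hD : D ⊆ powersetCard r univ)
    {M : Multiset (Finset α)} (hM : M ≤ D.val + saturatingFamily r D) {W : Finset α}
    (hW : #W = r) : Multiset.card (M.filter (· ⊆ W)) ≤ 1 := by
  have hD₀ : #{d ∈ D | d ⊆ W} ≤ 1 := card_le_one.2 fun d hd d' hd' => by
    have hcard (e) (he : e ∈ {d ∈ D | d ⊆ W}) : e = W := by
      obtain ⟨heD, heW⟩ := mem_filter.1 he
      exact eq_of_subset_of_card_le heW (by rw [hW, mem_powersetCard_univ.1 (hD heD)])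
    rw [hcard d hd, hcard d' hd']
  have hS₀ : (saturatingFamily r D).filter (· ⊆ W) = 0 :=
    Multiset.filter_eq_nil.2 fun V hV hVW =>
      absurd (card_le_card hVW) (by rw [card_of_mem_saturatingFamily hV, hW]; omega)
  calc Multiset.card (M.filter (· ⊆ W))
      ≤ Multiset.card ((D.val + saturatingFamily r D).filter (· ⊆ W)) :=
        Multiset.card_le_card (Multiset.filter_le_filter _ hM)
    _ ≤ 1 := by rwa [Multiset.filter_add, hS₀, add_zero, ← filter_val, card_val]

theorem card_filter_subset_le_succ_of_le_saturatingFamily (hD : D ⊆ powersetCard r univ)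
    {M : Multiset (Finset α)} (hM : M ≤ D.val + saturatingFamily r D) {W : Finset α}
    (hW : #W = r + 1) : Multiset.card (M.filter (· ⊆ W)) ≤ r + 1 := by
  have hS : (saturatingFamily r D).filter (· ⊆ W) = (saturatingFamily r D).filter (W = ·) :=
    Multiset.filter_congr fun V hV => ⟨fun hVW => (eq_of_subset_of_card_le hVW
      (by rw [hW, card_of_mem_saturatingFamily hV])).symm, fun h => h ▸ subset_rfl⟩
  calc Multiset.card (M.filter (· ⊆ W))
      ≤ Multiset.card ((D.val + saturatingFamily r D).filter (· ⊆ W)) :=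
        Multiset.card_le_card (Multiset.filter_le_filter _ hM)
    _ = r + 1 := by
      rw [Multiset.filter_add, hS, Multiset.card_add, ← Multiset.count_eq_card_filter_eq,
        ← filter_val, card_val, add_comm, count_saturatingFamily_add hD hW]

theorem exists_multiset_sized_card_filter_subset_le {q n' : ℕ}
    (hq : q ≤ (Fintype.card α).choose r)
    (hn' : n' + q * (Fintype.card α - r) ≤ (r + 1) * (Fintype.card α).choose (r + 1)) :
    ∃ M : Multiset (Finset α), Multiset.card M = q + n' ∧
      (M.map card).sum = q * r + n' * (r + 1) ∧ (∀ V ∈ M, #V = r ∨ #V = r + 1) ∧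
      (∀ W : Finset α, #W = r → Multiset.card (M.filter (· ⊆ W)) ≤ 1) ∧
      (∀ W : Finset α, #W = r + 1 → Multiset.card (M.filter (· ⊆ W)) ≤ r + 1) := by
  obtain ⟨D, hD, rfl⟩ :=
    exists_subset_card_eq (s := powersetCard r (univ : Finset α)) (n := q)
      (by rwa [card_powersetCard, card_univ])
  obtain ⟨P, hPS, hP⟩ := Multiset.exists_le_card_eq (s := saturatingFamily r D) (n := n')
    (by have := card_saturatingFamily_add hD; omega)
  have hM : D.val + P ≤ D.val + saturatingFamily r D := add_le_add_right hPS _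
  have hDr (d) (hd : d ∈ D) : #d = r := mem_powersetCard_univ.1 (hD hd)
  have hPr (V) (hV : V ∈ P) : #V = r + 1 := card_of_mem_saturatingFamily (Multiset.mem_of_le hPS hV)
  refine ⟨D.val + P, by rw [Multiset.card_add, card_val, hP], ?_, ?_,
    fun W => card_filter_subset_le_one_of_le_saturatingFamily hD hM,
    fun W => card_filter_subset_le_succ_of_le_saturatingFamily hD hM⟩
  · rw [Multiset.map_add, Multiset.sum_add, Finset.sum_map_val, sum_congr rfl hDr, sum_const,
      Multiset.map_congr rfl hPr, Multiset.map_const', Multiset.sum_replicate, hP, smul_eq_mul,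
      smul_eq_mul]
  · intro V hV
    rcases Multiset.mem_add.1 hV with hV | hV
    exacts [Or.inl (hDr V hV), Or.inr (hPr V hV)]

end SaturatingFamily

theorem sub_div_le_choose_and_add_mul_le {m r n q : ℕ} (hrm : r + 2 ≤ m)
    (hn₁ : m.choose r ≤ n) (hn₂ : n ≤ (r + 1) * m.choose (r + 1))
    (hq : q = ((r + 1) * m.choose (r + 1) - n) / (m - (r + 2) + 1)) :
    q ≤ m.choose r ∧ n - q + q * (m - r) ≤ (r + 1) * m.choose (r + 1) := by
  set b := m - (r + 2) + 1
  have hA : (r + 1) * m.choose (r + 1) = m.choose r * b + m.choose r := by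
    rw [mul_comm, Nat.choose_succ_right_eq, show m - r = b + 1 by omega, mul_add_one]
  have hqb : q * b ≤ (r + 1) * m.choose (r + 1) - n := hq ▸ Nat.div_mul_le_self _ _
  have hqc : q ≤ m.choose r := hq ▸ Nat.div_le_of_le_mul (by rw [mul_comm b]; omega)
  refine ⟨hqc, ?_⟩
  rw [show m - r = b + 1 by omega, mul_add_one]
  omega

theorem floor_natCast_sub_div_eq {A n m k : ℕ} (hn : n ≤ A) (hkm : k ≤ m) :
    ⌊((A : ℚ) - n) / ((m : ℚ) - k + 1)⌋ = ((A - n) / (m - k + 1) : ℕ) := by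
  rw [← Nat.cast_sub hn, show (m : ℚ) - k + 1 = ((m - k + 1 : ℕ) : ℚ) by
    push_cast [Nat.cast_sub hkm]; ring, Rat.floor_natCast_div_natCast, Int.natCast_div]

/-- Construction of optimal CBCs for `C(m,k-2) ≤ n ≤ (k-1)·C(m,k-1)` (with `m ≥ k ≥ 3`):
there exists an (n,N,k,m)-CBC with `N = n(k-1) - ⌊((k-1)·C(m,k-1) - n)/(m-k+1)⌋` whose
members are (k-1)-subsets and pairwise distinct (k-2)-subsets. -/
theorem optimal_cbc_construction (n k m : ℕ) (hk : 3 ≤ k) (hkm : k ≤ m)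
    (hn1 : Nat.choose m (k - 2) ≤ n) (hn2 : n ≤ (k - 1) * Nat.choose m (k - 1)) :
    ∃ X : Fin n → Finset (Fin m),
      (∀ J : Finset (Fin n), 1 ≤ J.card → J.card ≤ k →
          J.card ≤ (J.biUnion X).card) ∧
      ((∑ t, (X t).card : ℤ) = (n : ℤ) * (k - 1)
          - ⌊((((k - 1) * Nat.choose m (k - 1) : ℕ) : ℚ) - n) / ((m : ℚ) - k + 1)⌋) ∧
      (∀ t, (X t).card = k - 1 ∨ (X t).card = k - 2) ∧
      (∀ t s, t ≠ s → (X t).card = k - 2 → (X s).card = k - 2 → X t ≠ X s) := by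
  rw [floor_natCast_sub_div_eq hn2 hkm]
  obtain ⟨r, rfl⟩ : ∃ r, k = r + 2 := ⟨k - 2, by omega⟩
  simp only [show r + 2 - 1 = r + 1 from rfl, Nat.add_sub_cancel] at hn1 hn2 ⊢
  set q := ((r + 1) * m.choose (r + 1) - n) / (m - (r + 2) + 1) with hq
  obtain ⟨hqr, hqn⟩ := sub_div_le_choose_and_add_mul_le hkm hn1 hn2 hq
  obtain ⟨M, hMcard, hMsum, hMmem, hM₀, hM₁⟩ :=
    exists_multiset_sized_card_filter_subset_le (α := Fin m) (r := r) (q := q) (n' := n - q)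
      (by rwa [Fintype.card_fin]) (by rwa [Fintype.card_fin])
  obtain ⟨X, hX⟩ := M.exists_map_univ_eq (n := n) (by omega)
  have h₀ (W : Finset (Fin m)) (hW : #W = r) : #{t | X t ⊆ W} ≤ 1 :=
    (card_filter_univ_eq_card_filter hX _).trans_le (hM₀ W hW)
  have h₁ (W : Finset (Fin m)) (hW : #W = r + 1) : #{t | X t ⊆ W} ≤ r + 1 :=
    (card_filter_univ_eq_card_filter hX _).trans_le (hM₁ W hW)
  have hXcard (t) : #(X t) = r + 1 ∨ #(X t) = r :=
    (hMmem _ (hX ▸ Multiset.mem_map_of_mem _ (mem_univ_val t))).symm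
  have hXsum : ∑ t, #(X t) = q * r + (n - q) * (r + 1) := by
    rw [← hMsum, ← hX, Multiset.map_map]
    rfl
  refine ⟨X, fun J _ hJ => card_le_card_biUnion_of_sized (by omega)
      (fun t => by rcases hXcard t with h | h <;> omega) h₀ h₁ hJ, ?_, hXcard,
    fun t s hts ht _ => ne_of_card_filter_subset_le_one h₀ hts ht⟩
  rw [← Nat.cast_sum, hXsum]
  push_cast [Nat.cast_sub (hqr.trans hn1)]
  ring
end

section
/- Let m ≥ k ≥ 3 be integers and let n satisfy C(m, k−2) ≤ n ≤ (k−1)·C(m, k−1). Then N(n, k, m) = n(k−1) − ⌊((k−1)·C(m, k−1) − n)/(m−k+1)⌋. -/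
/-!
Lower bound. By Hall's condition, in a batch code for `k = r + 1` every `r`-set `A` contains at
most `r` blocks. Double counting pairs (block, `r`-superset), where a block of size `s ≤ r` lies
in `C(m - s, r - s) ≥ 1 + (m - r)(r - s)` of the `r`-sets, gives
`n + (m - r)(n r - N) ≤ r C(m, r)` for a code of total size `N`.

Upper bound. Take `D` distinct `(r - 1)`-sets as blocks and fill the remaining `n - D` blocks
with `r`-sets, using an `r`-set `A` at most `r - #{chosen (r - 1)-subsets of A}` times. Only
`(r - 1)`-sets and `r`-sets can then violate Hall's condition, and they do not. Since
`r C(m, r) = (m - r + 1) C(m, r - 1)`, there is room for the `n - D` further blocks as soon as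
`n + D (m - r) ≤ r C(m, r)`; the largest such `D` is the floor in the theorem.
-/

/-- `Nmin n k m` is the minimum total storage `N` over all (n,N,k,m)-combinatorial
batch codes: set systems of `n` subsets of an `m`-set such that every subcollection
of size at most `k` satisfies Hall's condition. -/
noncomputable def Nmin (n k m : ℕ) : ℕ :=
  sInf {N : ℕ | ∃ X : Fin n → Finset (Fin m),
    (∑ t, (X t).card) = N ∧
    ∀ J : Finset (Fin n), 1 ≤ J.card → J.card ≤ k → J.card ≤ (J.biUnion X).card}

open Finset

theorem Nat.one_add_mul_le_choose_add (a d : ℕ) : 1 + a * d ≤ (a + d).choose d := by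
  induction a generalizing d with
  | zero => simp
  | succ a ih =>
    cases d with
    | zero => simp
    | succ d =>
      have hd : d + 1 ≤ (a + 1 + d).choose d := by
        simpa using Nat.choose_le_choose d (show d + 1 ≤ a + 1 + d by omega)
      have := ih (d + 1)
      rw [show a + 1 + (d + 1) = a + 1 + d + 1 by omega, Nat.choose_succ_succ]
      rw [show a + (d + 1) = a + 1 + d by omega] at this
      linarith

namespace Finset

variable {α : Type*} [DecidableEq α]

theorem card_filter_subset_le_choose {S : Finset (Finset α)} {c : ℕ} (hS : ∀ B ∈ S, #B = c)
    (A : Finset α) : #{B ∈ S | B ⊆ A} ≤ (#A).choose c := by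
  rw [← card_powersetCard]
  exact card_le_card fun B hB ↦ by
    rw [mem_filter] at hB
    exact mem_powersetCard.2 ⟨hB.2, hS B hB.1⟩

theorem card_filter_subset_le_of_card_eq {S : Finset (Finset α)} {c : ℕ}
    (hS : ∀ B ∈ S, #B = c) {A : Finset α} (hA : #A = c + 1) :
    #{B ∈ S | B ⊆ A} ≤ c + 1 := by
  simpa [hA] using card_filter_subset_le_choose hS A

variable [Fintype α]

theorem one_add_mul_sub_le_card_supersets {r : ℕ} (hr : r ≤ Fintype.card α) (B : Finset α) :
    1 + ((Fintype.card α : ℤ) - r) * (r - #B) ≤ #{A ∈ powersetCard r univ | B ⊆ A} := by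
  rcases le_or_gt #B r with hBr | hBr
  · rw [card_filter_powersetCard_subset B univ r (subset_univ B) hBr, card_univ]
    have := Nat.one_add_mul_le_choose_add (Fintype.card α - r) (r - #B)
    rw [show Fintype.card α - r + (r - #B) = Fintype.card α - #B by omega] at this
    exact_mod_cast this
  · have hB : (#B : ℤ) ≤ Fintype.card α := mod_cast card_le_univ B
    have hBr : (r : ℤ) < #B := mod_cast hBr
    nlinarith [(#{A ∈ powersetCard r univ | B ⊆ A}).cast_nonneg (α := ℤ)]

end Finset

section BatchCode

variable {ι κ α : Type*} [DecidableEq α]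

def IsBatchCode (k : ℕ) (X : ι → Finset α) : Prop :=
  ∀ J : Finset ι, 1 ≤ #J → #J ≤ k → #J ≤ #(J.biUnion X)

theorem IsBatchCode.comp_embedding {k : ℕ} {X : ι → Finset α} (hX : IsBatchCode k X)
    (e : κ ↪ ι) : IsBatchCode k (X ∘ e) := fun J h1 h2 ↦ by
  classical
  have := hX (J.map e) (by rwa [card_map]) (by rwa [card_map])
  rwa [card_map, map_eq_image, image_biUnion] at this

theorem isBatchCode_iff [Fintype ι] {k : ℕ} {X : ι → Finset α} :
    IsBatchCode k X ↔ ∀ A : Finset α, #A < k → #{i | X i ⊆ A} ≤ #A := by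
  constructor
  · intro hX A hA
    by_contra! h
    obtain ⟨J, hJ, hJcard⟩ := exists_subset_card_eq (Nat.succ_le_of_lt h)
    have hunion : J.biUnion X ⊆ A := biUnion_subset.2 fun i hi ↦ (mem_filter.1 (hJ hi)).2
    have := hX J (by omega) (by omega)
    have := card_le_card hunion
    omega
  · intro h J h1 h2
    by_contra! hJ
    have hsub : J ⊆ ({i | X i ⊆ J.biUnion X} : Finset ι) := fun i hi ↦
      mem_filter.2 ⟨mem_univ i, subset_biUnion_of_mem X hi⟩
    have := card_le_card hsub
    have := h (J.biUnion X) (by omega)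
    omega

theorem isBatchCode_subtype_iff {β : Type*} {Z : Finset β} {f : β → Finset α} {k : ℕ} :
    IsBatchCode k (fun z : Z ↦ f z) ↔
      ∀ A : Finset α, #A < k → #{z ∈ Z | f z ⊆ A} ≤ #A := by
  rw [isBatchCode_iff]
  refine forall_congr' fun A ↦ ?_
  rw [card_filter, card_filter, sum_coe_sort Z fun z ↦ if f z ⊆ A then 1 else 0]

theorem IsBatchCode.exists_fin [Fintype ι] {k n : ℕ} {X : ι → Finset α}
    (hX : IsBatchCode k X) (hn : Fintype.card ι = n) :
    ∃ Y : Fin n → Finset α, IsBatchCode k Y ∧ ∑ t, #(Y t) = ∑ i, #(X i) := by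
  let e := (Fintype.equivFinOfCardEq hn).symm
  exact ⟨X ∘ e, hX.comp_embedding e.toEmbedding, e.sum_comp fun i ↦ #(X i)⟩

theorem IsBatchCode.card_add_mul_le [Fintype ι] [Fintype α] {r : ℕ} {X : ι → Finset α}
    (hX : IsBatchCode (r + 1) X) (hr : r ≤ Fintype.card α) :
    (Fintype.card ι : ℤ)
        + ((Fintype.card α : ℤ) - r) * (Fintype.card ι * r - (∑ i, #(X i) : ℕ))
      ≤ r * (Fintype.card α).choose r := by
  set P := powersetCard r (univ : Finset α)
  have hfew (A) (hA : A ∈ P) : #{i | X i ⊆ A} ≤ r := by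
    have hAr := (mem_powersetCard.1 hA).2
    exact hAr ▸ isBatchCode_iff.1 hX A (by omega)
  have hcount : ∑ i, #{A ∈ P | X i ⊆ A} ≤ r * (Fintype.card α).choose r :=
    calc ∑ i, #{A ∈ P | X i ⊆ A} = ∑ A ∈ P, #{i | X i ⊆ A} :=
          sum_card_bipartiteAbove_eq_sum_card_bipartiteBelow (r := fun i A ↦ X i ⊆ A)
      _ ≤ ∑ A ∈ P, r := sum_le_sum hfew
      _ = r * (Fintype.card α).choose r := by simp [P, mul_comm]
  calc _ = ∑ i, (1 + ((Fintype.card α : ℤ) - r) * (r - #(X i))) := by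
        push_cast
        rw [sum_add_distrib, ← mul_sum, sum_sub_distrib]
        simp
    _ ≤ ∑ i, (#{A ∈ P | X i ⊆ A} : ℤ) :=
        sum_le_sum fun i _ ↦ one_add_mul_sub_le_card_supersets hr (X i)
    _ ≤ r * (Fintype.card α).choose r := mod_cast hcount

theorem IsBatchCode.mul_sub_div_le_sum [Fintype ι] [Fintype α] {r : ℕ} {X : ι → Finset α}
    (hX : IsBatchCode (r + 1) X) (hr : r < Fintype.card α)
    (hι : Fintype.card ι ≤ r * (Fintype.card α).choose r) :
    Fintype.card ι * r - (r * (Fintype.card α).choose r - Fintype.card ι) / (Fintype.card α - r)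
      ≤ ∑ i, #(X i) := by
  have h := hX.card_add_mul_le hr.le
  set n := Fintype.card ι
  set N := ∑ i, #(X i)
  suffices n * r - N ≤ (r * (Fintype.card α).choose r - n) / (Fintype.card α - r) by omega
  rw [Nat.le_div_iff_mul_le (by omega)]
  rcases le_total (n * r) N with hN | hN
  · simp [Nat.sub_eq_zero_of_le hN]
  · zify [hN, hι, hr.le]
    linarith

end BatchCode

theorem Nmin_le_of_isBatchCode {n k m : ℕ} {X : Fin n → Finset (Fin m)} (hX : IsBatchCode k X) :
    Nmin n k m ≤ ∑ t, #(X t) :=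
  Nat.sInf_le ⟨X, rfl, hX⟩

theorem exists_isBatchCode_sum_eq_Nmin {n k m : ℕ} (X : Fin n → Finset (Fin m))
    (hX : IsBatchCode k X) :
    ∃ Y : Fin n → Finset (Fin m), IsBatchCode k Y ∧ ∑ t, #(Y t) = Nmin n k m := by
  obtain ⟨Y, hYsum, hY⟩ := Nat.sInf_mem (⟨_, X, rfl, hX⟩ :
    {N | ∃ Y : Fin n → Finset (Fin m), ∑ t, #(Y t) = N ∧ IsBatchCode k Y}.Nonempty)
  exact ⟨Y, hY, hYsum⟩

section Construction

variable {α : Type*} [DecidableEq α] [Fintype α]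

/-- `⟨A, j⟩` is the `j`-th copy of the `(c + 1)`-set `A` that may still be added to the blocks
`S` without `A` containing more than `c + 1` blocks. -/
def spareSlots (S : Finset (Finset α)) (c : ℕ) : Finset (Σ _ : Finset α, ℕ) :=
  (powersetCard (c + 1) univ).sigma fun A ↦ range (c + 1 - #{B ∈ S | B ⊆ A})

def labelZero : Finset α ↪ Σ _ : Finset α, ℕ :=
  ⟨fun B ↦ ⟨B, 0⟩, fun _ _ h ↦ congrArg Sigma.fst h⟩

theorem sum_card_filter_subset_powersetCard {S : Finset (Finset α)} {c : ℕ}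
    (hS : ∀ B ∈ S, #B = c) :
    ∑ A ∈ powersetCard (c + 1) univ, #{B ∈ S | B ⊆ A} = #S * (Fintype.card α - c) := by
  have hswap : ∑ A ∈ powersetCard (c + 1) univ, #{B ∈ S | B ⊆ A}
      = ∑ B ∈ S, #{A ∈ powersetCard (c + 1) univ | B ⊆ A} :=
    (sum_card_bipartiteAbove_eq_sum_card_bipartiteBelow (s := S)
      (t := powersetCard (c + 1) univ) (r := fun B A ↦ B ⊆ A)).symm
  rw [hswap]
  refine sum_const_nat fun B hB ↦ ?_
  rw [card_filter_powersetCard_subset B univ (c + 1) (subset_univ B)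
    (by rw [hS B hB]; omega), card_univ, hS B hB, Nat.add_sub_cancel_left, Nat.choose_one_right]

theorem card_spareSlots_add {S : Finset (Finset α)} {c : ℕ} (hS : ∀ B ∈ S, #B = c) :
    #(spareSlots S c) + #S * (Fintype.card α - c)
      = (c + 1) * (Fintype.card α).choose (c + 1) := by
  rw [spareSlots, card_sigma, ← sum_card_filter_subset_powersetCard hS, ← sum_add_distrib]
  simp_rw [card_range]
  rw [sum_congr rfl fun A hA ↦ Nat.sub_add_cancel
    (card_filter_subset_le_of_card_eq hS (mem_powersetCard.1 hA).2)]
  simp [mul_comm]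

theorem isBatchCode_map_labelZero_union {S : Finset (Finset α)} {c : ℕ} (hc : 1 ≤ c)
    (hS : ∀ B ∈ S, #B = c) {Y : Finset (Σ _ : Finset α, ℕ)} (hY : Y ⊆ spareSlots S c) :
    IsBatchCode (c + 2) (fun z : ↥(S.map labelZero ∪ Y) ↦ z.1.1) := by
  rw [isBatchCode_subtype_iff]
  intro A hA
  have hYsized (z) (hz : z ∈ Y) : #z.1 = c + 1 := (mem_powersetCard.1 (mem_sigma.1 (hY hz)).1).2
  have hload := card_filter_subset_le_choose hS A
  rw [filter_union]
  refine (card_union_le _ _).trans ?_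
  rw [filter_map, card_map]
  change #{B ∈ S | B ⊆ A} + _ ≤ _
  rcases Nat.lt_or_ge #A (c + 1) with hAc | hAc
  · have hYA : {z ∈ Y | z.1 ⊆ A} = ∅ := filter_eq_empty_iff.2 fun z hz hzA ↦ by
      have := card_le_card hzA
      rw [hYsized z hz] at this
      omega
    rw [hYA, card_empty]
    have : (#A).choose c ≤ #A := by
      rcases Nat.lt_or_ge #A c with h | h
      · simp [Nat.choose_eq_zero_of_lt h]
      · rw [show #A = c by omega, Nat.choose_self]
        omega
    omega
  · have hAc : #A = c + 1 := by omega
    have hYA : #{z ∈ Y | z.1 ⊆ A} ≤ c + 1 - #{B ∈ S | B ⊆ A} :=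
      calc #{z ∈ Y | z.1 ⊆ A}
          ≤ #(({A} : Finset (Finset α)).sigma
              fun A ↦ range (c + 1 - #{B ∈ S | B ⊆ A})) := by
            refine card_le_card fun z hz ↦ ?_
            obtain ⟨hzY, hzA⟩ := mem_filter.1 hz
            have hzA : z.1 = A := eq_of_subset_of_card_le hzA (by rw [hYsized z hzY, hAc])
            exact mem_sigma.2 ⟨mem_singleton.2 hzA, (mem_sigma.1 (hY hzY)).2⟩
        _ = c + 1 - #{B ∈ S | B ⊆ A} := by simp
    have := card_filter_subset_le_of_card_eq hS hAc
    omega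

theorem exists_isBatchCode_sum_eq {n c D : ℕ} (hc : 1 ≤ c)
    (hD : D ≤ (Fintype.card α).choose c) (hDn : D ≤ n)
    (hcap : n + D * (Fintype.card α - (c + 1)) ≤ (c + 1) * (Fintype.card α).choose (c + 1)) :
    ∃ X : Fin n → Finset α, IsBatchCode (c + 2) X ∧ ∑ t, #(X t) = n * (c + 1) - D := by
  obtain ⟨S, hSP, rfl⟩ :=
    exists_subset_card_eq (s := powersetCard c (univ : Finset α)) (by simpa using hD)
  have hS (B) (hB : B ∈ S) : #B = c := (mem_powersetCard.1 (hSP hB)).2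
  have hspare : n - #S ≤ #(spareSlots S c) := by
    have := card_spareSlots_add hS
    have : #S * (Fintype.card α - c) ≤ #S * (Fintype.card α - (c + 1)) + #S := by
      rw [← Nat.mul_add_one]
      exact Nat.mul_le_mul_left _ (by omega)
    omega
  obtain ⟨Y, hY, hYcard⟩ := exists_subset_card_eq hspare
  have hYsized (z) (hz : z ∈ Y) : #z.1 = c + 1 := (mem_powersetCard.1 (mem_sigma.1 (hY hz)).1).2
  have hdisj : Disjoint (S.map labelZero) Y := disjoint_left.2 fun z hzS hzY ↦ by
    obtain ⟨B, hB, rfl⟩ := mem_map.1 hzS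
    have : #B = c + 1 := hYsized _ hzY
    have := hS B hB
    omega
  obtain ⟨X, hX, hXsum⟩ := (isBatchCode_map_labelZero_union hc hS hY).exists_fin (n := n)
    (by rw [Fintype.card_coe, card_union_of_disjoint hdisj, card_map]; omega)
  refine ⟨X, hX, ?_⟩
  rw [hXsum, sum_coe_sort (S.map labelZero ∪ Y) fun z ↦ #z.1, sum_union hdisj, sum_map]
  change ∑ B ∈ S, #B + _ = _
  rw [sum_const_nat hS, sum_const_nat hYsized, hYcard]
  obtain ⟨t, rfl⟩ := Nat.exists_eq_add_of_le hDn
  simp only [Nat.add_sub_cancel_left]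
  ring_nf
  omega

end Construction

/-- Optimal total storage for `C(m,k-2) ≤ n ≤ (k-1)·C(m,k-1)` (with `m ≥ k ≥ 3`):
`N(n,k,m) = n(k-1) - ⌊((k-1)·C(m,k-1) - n)/(m-k+1)⌋`. -/
theorem Nmin_middle_range (n k m : ℕ) (hk : 3 ≤ k) (hkm : k ≤ m)
    (hn1 : Nat.choose m (k - 2) ≤ n) (hn2 : n ≤ (k - 1) * Nat.choose m (k - 1)) :
    (Nmin n k m : ℤ) = (n : ℤ) * (k - 1)
      - ⌊((((k - 1) * Nat.choose m (k - 1) : ℕ) : ℚ) - n) / ((m : ℚ) - k + 1)⌋ := by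
  obtain ⟨c, rfl⟩ : ∃ c, k = c + 2 := ⟨k - 2, by omega⟩
  rw [show c + 2 - 1 = c + 1 by omega] at hn2 ⊢
  rw [Nat.add_sub_cancel] at hn1
  set T := (c + 1) * m.choose (c + 1)
  set D := (T - n) / (m - (c + 1))
  have hT : T = (m - (c + 1)) * m.choose c + m.choose c := by
    rw [← add_one_mul, show m - (c + 1) + 1 = m - c by omega, mul_comm,
      ← Nat.choose_succ_right_eq, mul_comm]
  have hD : D ≤ m.choose c := Nat.div_le_of_le_mul (by omega)
  have hcap : n + D * (m - (c + 1)) ≤ T := by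
    have : D * (m - (c + 1)) ≤ T - n := Nat.div_mul_le_self _ _
    omega
  have hfloor : ⌊((T : ℚ) - n) / ((m : ℚ) - (c + 2 : ℕ) + 1)⌋ = D := by
    rw [show ((T : ℚ) - n) / ((m : ℚ) - (c + 2 : ℕ) + 1)
        = ((T - n : ℕ) : ℤ) / ((m - (c + 1) : ℕ) : ℚ) by
      push_cast [hn2, show c + 1 ≤ m by omega]
      ring_nf,
      Rat.floor_intCast_div_natCast, Int.natCast_div]
  obtain ⟨X, hX, hXsum⟩ := exists_isBatchCode_sum_eq (α := Fin m) (n := n) (by omega : 1 ≤ c)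
    (by simpa using hD) (hD.trans hn1) (by simpa using hcap)
  have hub : Nmin n (c + 2) m ≤ n * (c + 1) - D := (Nmin_le_of_isBatchCode hX).trans_eq hXsum
  obtain ⟨Y, hY, hYsum⟩ := exists_isBatchCode_sum_eq_Nmin X hX
  have hlb : n * (c + 1) - D ≤ Nmin n (c + 2) m := by
    simpa [hYsum] using hY.mul_sub_div_le_sum (r := c + 1)
      (by simp only [Fintype.card_fin]; omega) (by simpa using hn2)
  have hDn : D ≤ n * (c + 1) := (hD.trans hn1).trans (Nat.le_mul_of_pos_right n (by omega))
  rw [hfloor, le_antisymm hub hlb]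
  push_cast [hDn]
  ring
end

section
/- Let m ≥ k ≥ 5 be integers and let n satisfy C(m, k−2) − (m−k+1)·A(m, 4, k−3) ≤ n ≤ C(m, k−2). If the remainder of C(m, k−2) − n upon division by m−k+1 is at least (m−k+1)/2, then N(n, k, m) ≤ n(k−2) − 2·⌊(C(m, k−2) − n)/(m−k+1)⌋. -/
/-- `maxCW m d w` = `A(m, d, w)`: maximum size of a family of distinct `w`-subsets of an
`m`-set with pairwise symmetric differences of cardinality at least `d`. -/
noncomputable def maxCW (m d w : ℕ) : ℕ :=
  sSup {s : ℕ | ∃ F : Finset (Finset (Fin m)), F.card = s ∧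
    (∀ C ∈ F, C.card = w) ∧
    ∀ C ∈ F, ∀ D ∈ F, C ≠ D → d ≤ (symmDiff C D).card}

open Finset FinsetFamily
open scoped symmDiff

section SetFamily

variable {α : Type*} [DecidableEq α]

lemma card_symmDiff_add_card_inter (s t : Finset α) : #(s ∆ t) + #(s ∩ t) = #(s ∪ t) := by
  rw [symmDiff_eq_sup_sdiff_inf]
  exact card_sdiff_add_card_eq_card inf_le_sup

lemma add_two_le_card_union_of_four_le_card_symmDiff {s t : Finset α} {w : ℕ}
    (hs : #s = w) (ht : #t = w) (hst : 4 ≤ #(s ∆ t)) : w + 2 ≤ #(s ∪ t) := by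
  have := card_symmDiff_add_card_inter s t
  have := card_union_add_card_inter s t
  omega

lemma card_lt_card_union_of_not_subset {s t : Finset α} (h : ¬ t ⊆ s) : #s < #(s ∪ t) :=
  card_lt_card (left_lt_sup.2 h)

lemma sum_card_sdiff_le_of_union_eq {U : Finset α} {𝒮 : Finset (Finset α)}
    (h𝒮 : ∀ s ∈ 𝒮, ∀ s' ∈ 𝒮, s ≠ s' → s ∪ s' = U) : ∑ s ∈ 𝒮, #(U \ s) ≤ #U := by
  have hdisj : (𝒮 : Set (Finset α)).PairwiseDisjoint (U \ ·) := by
    intro s hs s' hs' hne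
    rw [Function.onFun, disjoint_left]
    intro x hx hx'
    have hxU : x ∈ s ∪ s' := h𝒮 s hs s' hs' hne ▸ (mem_sdiff.1 hx).1
    rcases mem_union.1 hxU with h | h
    · exact (mem_sdiff.1 hx).2 h
    · exact (mem_sdiff.1 hx').2 h
  rw [← card_biUnion hdisj]
  exact card_le_card (biUnion_subset.2 fun s _ => sdiff_subset)

lemma add_two_le_card_union_of_mem_union {w : ℕ} {𝒜 ℬ : Finset (Finset α)}
    (h𝒜 : (𝒜 : Set (Finset α)).Sized (w + 1)) (hℬ : (ℬ : Set (Finset α)).Sized w)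
    (hℬdist : (ℬ : Set (Finset α)).Pairwise fun t t' => 4 ≤ #(t ∆ t'))
    (hfree : ∀ s ∈ 𝒜, ∀ t ∈ ℬ, ¬ t ⊆ s) {s s' : Finset α} (hs : s ∈ 𝒜 ∪ ℬ)
    (hs' : s' ∈ 𝒜 ∪ ℬ) (hne : s ≠ s') : w + 2 ≤ #(s ∪ s') := by
  have h𝒜ℬ : ∀ s ∈ 𝒜, ∀ t ∈ ℬ, w + 2 ≤ #(s ∪ t) := fun s hs t ht => by
    have := card_lt_card_union_of_not_subset (hfree s hs t ht)
    have := h𝒜 hs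
    omega
  rcases mem_union.1 hs with hs | hs <;> rcases mem_union.1 hs' with hs' | hs'
  · have hns : ¬ s' ⊆ s := fun h =>
      hne (eq_of_subset_of_card_le h (by rw [h𝒜 hs, h𝒜 hs'])).symm
    have := card_lt_card_union_of_not_subset hns
    have := h𝒜 hs
    omega
  · exact h𝒜ℬ s hs s' hs'
  · exact union_comm s s' ▸ h𝒜ℬ s' hs' s hs
  · exact add_two_le_card_union_of_four_le_card_symmDiff (hℬ hs) (hℬ hs') (hℬdist hs hs' hne)

/-- Hall's condition for the servers storing the sets of `𝒜` once and those of `ℬ` twice,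
when the servers jointly store at most `w + 2` points. -/
theorem card_add_two_mul_card_le_card {w : ℕ} (hw : 2 ≤ w) {U : Finset α}
    {𝒜 ℬ : Finset (Finset α)} (h𝒜U : ∀ s ∈ 𝒜, s ⊆ U) (hℬU : ∀ t ∈ ℬ, t ⊆ U)
    (h𝒜 : (𝒜 : Set (Finset α)).Sized (w + 1)) (hℬ : (ℬ : Set (Finset α)).Sized w)
    (hℬdist : (ℬ : Set (Finset α)).Pairwise fun t t' => 4 ≤ #(t ∆ t'))
    (hfree : ∀ s ∈ 𝒜, ∀ t ∈ ℬ, ¬ t ⊆ s) (hU : #U ≤ w + 2) :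
    #𝒜 + 2 * #ℬ ≤ #U := by
  have hsub : ∀ s ∈ 𝒜 ∪ ℬ, s ⊆ U ∧ w ≤ #s := by
    intro s hs
    rcases mem_union.1 hs with hs | hs
    · exact ⟨h𝒜U s hs, by have := h𝒜 hs; omega⟩
    · exact ⟨hℬU s hs, (hℬ hs).ge⟩
  have hspread {s s'} (hs : s ∈ 𝒜 ∪ ℬ) (hs' : s' ∈ 𝒜 ∪ ℬ) (hne : s ≠ s') : w + 2 ≤ #(s ∪ s') :=
    add_two_le_card_union_of_mem_union h𝒜 hℬ hℬdist hfree hs hs' hne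
  have hdisj : Disjoint 𝒜 ℬ := disjoint_left.2 fun s hs hs' => by
    have := h𝒜 hs
    have := hℬ hs'
    omega
  rcases hU.lt_or_eq with hU | hU
  · -- No two distinct stored sets fit into `U`, so at most one set is involved.
    have hle : #(𝒜 ∪ ℬ) ≤ 1 := card_le_one.2 fun s hs s' hs' => by
      by_contra hne
      have := card_le_card (union_subset (hsub s hs).1 (hsub s' hs').1)
      have := hspread hs hs' hne
      omega
    rcases (𝒜 ∪ ℬ).eq_empty_or_nonempty with he | ⟨s, hs⟩
    · simp_all
    · have := card_le_card (hsub s hs).1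
      have := (hsub s hs).2
      have := card_union_of_disjoint hdisj
      omega
  · -- Otherwise distinct stored sets cover `U`, and their complements in `U` are disjoint.
    have hcover : ∀ s ∈ 𝒜 ∪ ℬ, ∀ s' ∈ 𝒜 ∪ ℬ, s ≠ s' → s ∪ s' = U := fun s hs s' hs' hne =>
      eq_of_subset_of_card_le (union_subset (hsub s hs).1 (hsub s' hs').1)
        (hU ▸ hspread hs hs' hne)
    have hsum := sum_card_sdiff_le_of_union_eq hcover
    have h𝒜sum : ∑ s ∈ 𝒜, #(U \ s) = #𝒜 * 1 := sum_const_nat fun s hs => by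
      rw [card_sdiff_of_subset (h𝒜U s hs), h𝒜 hs, hU]
      omega
    have hℬsum : ∑ t ∈ ℬ, #(U \ t) = #ℬ * 2 := sum_const_nat fun t ht => by
      rw [card_sdiff_of_subset (hℬU t ht), hℬ ht, hU]
      omega
    rw [sum_union hdisj, h𝒜sum, hℬsum] at hsum
    omega

theorem card_le_card_biUnion_sumElim {w : ℕ} (hw : 2 ≤ w) {𝒜 𝒞 : Finset (Finset α)}
    (h𝒜 : (𝒜 : Set (Finset α)).Sized (w + 1)) (h𝒞 : (𝒞 : Set (Finset α)).Sized w)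
    (hdist : (𝒞 : Set (Finset α)).Pairwise fun t t' => 4 ≤ #(t ∆ t'))
    (hfree : ∀ s ∈ 𝒜, ∀ t ∈ 𝒞, ¬ t ⊆ s) {J : Finset (𝒜 ⊕ 𝒞 × Bool)} (hJ : #J ≤ w + 3) :
    #J ≤ #(J.biUnion (Sum.elim (fun s : 𝒜 => (s : Finset α)) fun p => p.1)) := by
  set X : 𝒜 ⊕ 𝒞 × Bool → Finset α := Sum.elim (fun s => s) fun p => p.1
  set U := J.biUnion X
  by_cases hU : w + 3 ≤ #U
  · exact hJ.trans hU
  set 𝒜J := J.toLeft.map (Function.Embedding.subtype _)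
  set ℬJ := (J.toRight.image Prod.fst).map (Function.Embedding.subtype _)
  have h𝒜J : ∀ s ∈ 𝒜J, s ∈ 𝒜 ∧ s ⊆ U := by
    simp only [𝒜J, mem_map, mem_toLeft, Function.Embedding.coe_subtype]
    rintro _ ⟨s, hs, rfl⟩
    exact ⟨s.2, subset_biUnion_of_mem X hs⟩
  have hℬJ : ∀ t ∈ ℬJ, t ∈ 𝒞 ∧ t ⊆ U := by
    simp only [ℬJ, mem_map, mem_image, mem_toRight, Function.Embedding.coe_subtype]
    rintro _ ⟨_, ⟨⟨t, b⟩, hp, rfl⟩, rfl⟩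
    exact ⟨t.2, subset_biUnion_of_mem X hp⟩
  have hright : #J.toRight ≤ 2 * #ℬJ :=
    calc #J.toRight ≤ #(J.toRight.image Prod.fst ×ˢ J.toRight.image Prod.snd) :=
          card_le_card subset_product
      _ ≤ #(J.toRight.image Prod.fst) * 2 := by
          rw [card_product]
          exact Nat.mul_le_mul_left _ (card_le_univ _)
      _ = 2 * #ℬJ := by rw [card_map, mul_comm]
  have hcore := card_add_two_mul_card_le_card hw (fun s hs => (h𝒜J s hs).2)
    (fun t ht => (hℬJ t ht).2) (h𝒜.mono fun s hs => (h𝒜J s hs).1)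
    (h𝒞.mono fun t ht => (hℬJ t ht).1) (hdist.mono fun t ht => (hℬJ t ht).1)
    (fun s hs t ht => hfree s (h𝒜J s hs).1 t (hℬJ t ht).1) (by omega)
  have hleft : #𝒜J = #J.toLeft := card_map _
  rw [← card_toLeft_add_card_toRight (u := J)]
  omega

end SetFamily

section UpShadow

variable {α : Type*} [DecidableEq α] [Fintype α]

lemma upShadow_singleton (s : Finset α) : ∂⁺ {s} = sᶜ.image (insert · s) := sup_singleton

lemma upShadow_eq_biUnion (𝒜 : Finset (Finset α)) : ∂⁺ 𝒜 = 𝒜.biUnion fun s => ∂⁺ {s} := by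
  simp only [upShadow_singleton]
  exact sup_eq_biUnion _ _

lemma card_upShadow_singleton (s : Finset α) : #(∂⁺ {s}) = Fintype.card α - #s := by
  rw [upShadow_singleton, card_image_of_injOn, card_compl]
  intro a ha b _ hab
  exact (insert_inj (mem_compl.1 ha)).1 hab

lemma disjoint_upShadow_singleton {s t : Finset α} {w : ℕ} (hs : #s = w) (ht : #t = w)
    (hst : 4 ≤ #(s ∆ t)) : Disjoint (∂⁺ {s}) (∂⁺ {t}) := by
  rw [disjoint_left]
  intro u hus hut
  simp only [mem_upShadow_iff_exists_mem_card_add_one, mem_singleton, exists_eq_left] at hus hut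
  have := card_le_card (union_subset hus.1 hut.1)
  have := add_two_le_card_union_of_four_le_card_symmDiff hs ht hst
  omega

lemma card_upShadow_le {𝒜 : Finset (Finset α)} {w : ℕ} (h𝒜 : (𝒜 : Set (Finset α)).Sized w) :
    #(∂⁺ 𝒜) ≤ #𝒜 * (Fintype.card α - w) := by
  rw [upShadow_eq_biUnion]
  exact card_biUnion_le.trans_eq <| sum_const_nat fun s hs => by
    rw [card_upShadow_singleton, h𝒜 hs]

lemma card_upShadow_of_pairwise {𝒜 : Finset (Finset α)} {w : ℕ}
    (h𝒜 : (𝒜 : Set (Finset α)).Sized w)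
    (hdist : (𝒜 : Set (Finset α)).Pairwise fun s t => 4 ≤ #(s ∆ t)) :
    #(∂⁺ 𝒜) = #𝒜 * (Fintype.card α - w) := by
  rw [upShadow_eq_biUnion, card_biUnion fun s hs t ht hne =>
    disjoint_upShadow_singleton (h𝒜 hs) (h𝒜 ht) (hdist hs ht hne)]
  exact sum_const_nat fun s hs => by rw [card_upShadow_singleton, h𝒜 hs]

lemma card_mul_le_choose_of_pairwise {𝒜 : Finset (Finset α)} {w : ℕ}
    (h𝒜 : (𝒜 : Set (Finset α)).Sized w)
    (hdist : (𝒜 : Set (Finset α)).Pairwise fun s t => 4 ≤ #(s ∆ t)) :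
    #𝒜 * (Fintype.card α - w) ≤ (Fintype.card α).choose (w + 1) :=
  card_upShadow_of_pairwise h𝒜 hdist ▸ h𝒜.upShadow.card_le

end UpShadow

lemma exists_card_eq_maxCW (m d w : ℕ) : ∃ 𝒞 : Finset (Finset (Fin m)), #𝒞 = maxCW m d w ∧
    (𝒞 : Set (Finset (Fin m))).Sized w ∧
    (𝒞 : Set (Finset (Fin m))).Pairwise fun s t => d ≤ #(s ∆ t) := by
  obtain ⟨𝒞, h𝒞, hw, hd⟩ : maxCW m d w ∈ {s : ℕ | ∃ F : Finset (Finset (Fin m)), #F = s ∧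
      (∀ C ∈ F, #C = w) ∧ ∀ C ∈ F, ∀ D ∈ F, C ≠ D → d ≤ #(C ∆ D)} :=
    Nat.sSup_mem ⟨0, ∅, by simp⟩
      ⟨Fintype.card (Finset (Fin m)), by rintro _ ⟨F, rfl, -⟩; exact card_le_univ F⟩
  exact ⟨𝒞, h𝒞, fun s hs => hw s hs, fun s hs t ht hne => hd s hs t ht hne⟩

lemma Nmin_le_sum_card {ι : Type*} [Fintype ι] {n k m : ℕ} (hι : Fintype.card ι = n)
    (X : ι → Finset (Fin m)) (hX : ∀ J : Finset ι, #J ≤ k → #J ≤ #(J.biUnion X)) :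
    Nmin n k m ≤ ∑ i, #(X i) := by
  classical
  let e : ι ≃ Fin n := Fintype.equivFinOfCardEq hι
  refine Nat.sInf_le ⟨X ∘ e.symm, e.symm.sum_comp fun i => #(X i), fun J _ hJ => ?_⟩
  have := hX (J.image e.symm) (by rwa [card_image_of_injective _ e.symm.injective])
  rwa [card_image_of_injective _ e.symm.injective, image_biUnion] at this

/-- The `(w+1)`-sets avoiding the up-shadow of a distance-4 code `𝒞` of `w`-sets, stored once,
and the codewords, stored twice, form a batch code. -/
theorem Nmin_le_of_code {m w f : ℕ} (hw : 2 ≤ w) {𝒞 : Finset (Finset (Fin m))}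
    (h𝒞 : (𝒞 : Set (Finset (Fin m))).Sized w)
    (hdist : (𝒞 : Set (Finset (Fin m))).Pairwise fun s t => 4 ≤ #(s ∆ t))
    (hf : f + #𝒞 * (m - w) ≤ m.choose (w + 1)) :
    Nmin (f + 2 * #𝒞) (w + 3) m ≤ f * (w + 1) + 2 * #𝒞 * w := by
  obtain ⟨𝒜, h𝒜free, h𝒜⟩ : ∃ 𝒜 ⊆ powersetCard (w + 1) univ \ ∂⁺ 𝒞, #𝒜 = f := by
    refine exists_subset_card_eq (le_trans ?_ (le_card_sdiff _ _))
    have := card_upShadow_le h𝒞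
    rw [card_powersetCard, card_univ, Fintype.card_fin] at *
    omega
  have h𝒜sized : (𝒜 : Set (Finset (Fin m))).Sized (w + 1) := fun s hs =>
    mem_powersetCard_univ.1 (mem_sdiff.1 (h𝒜free hs)).1
  have hfree : ∀ s ∈ 𝒜, ∀ t ∈ 𝒞, ¬ t ⊆ s := fun s hs t ht hts =>
    (mem_sdiff.1 (h𝒜free hs)).2 <|
      mem_upShadow_iff_exists_mem_card_add_one.2 ⟨t, ht, hts, by rw [h𝒜sized hs, h𝒞 ht]⟩
  have hcard : Fintype.card (𝒜 ⊕ 𝒞 × Bool) = f + 2 * #𝒞 := by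
    simp [h𝒜, mul_comm]
  calc Nmin (f + 2 * #𝒞) (w + 3) m
      ≤ ∑ i, #(Sum.elim (fun s : 𝒜 => (s : Finset (Fin m))) (fun p => p.1) i) :=
        Nmin_le_sum_card hcard _ fun J hJ =>
          card_le_card_biUnion_sumElim hw h𝒜sized h𝒞 hdist hfree hJ
    _ = f * (w + 1) + 2 * #𝒞 * w := by
        simp only [Fintype.sum_sum_type, Sum.elim_inl, Sum.elim_inr, Fintype.sum_prod_type,
          sum_const, card_univ, Fintype.card_bool, smul_eq_mul, sum_coe_sort (f := card)]
        rw [sum_const_nat fun s hs => h𝒜sized hs, ← mul_sum, sum_coe_sort 𝒞 card,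
          sum_const_nat fun t ht => h𝒞 ht, h𝒜]
        ring

lemma floor_sub_div_sub_add_one {C n m k : ℕ} (hn : n ≤ C) (hkm : k ≤ m) :
    ⌊((C : ℚ) - n) / ((m : ℚ) - k + 1)⌋ = ((C - n) / (m - k + 1) : ℕ) := by
  rw [Int.natCast_div, ← Rat.floor_natCast_div_natCast]
  push_cast [hn, hkm]
  ring_nf

theorem Nmin_add_two_mul_div_le {n m w : ℕ} (hw : 2 ≤ w) (hwm : w + 3 ≤ m)
    (hn1 : m.choose (w + 1) - (m - (w + 3) + 1) * maxCW m 4 w ≤ n)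
    (hn2 : n ≤ m.choose (w + 1)) :
    Nmin n (w + 3) m + 2 * ((m.choose (w + 1) - n) / (m - (w + 3) + 1)) ≤ n * (w + 1) := by
  set C := m.choose (w + 1)
  set d := m - (w + 3) + 1
  set q := (C - n) / d
  obtain ⟨𝒞₀, h𝒞₀, hsized, hdist⟩ := exists_card_eq_maxCW m 4 w
  rw [← h𝒞₀, mul_comm] at hn1
  have hcode := card_mul_le_choose_of_pairwise hsized hdist
  rw [Fintype.card_fin, show m - w = d + 2 by omega, mul_add] at hcode
  have hq : q ≤ #𝒞₀ := Nat.div_le_of_le_mul (by rw [mul_comm]; omega)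
  have hqd : q * d ≤ C - n := Nat.div_mul_le_self _ _
  have h2q : 2 * q ≤ n := by
    have := Nat.mul_le_mul_right d hq
    omega
  obtain ⟨f, hf⟩ : ∃ f, n = f + 2 * q := ⟨n - 2 * q, by omega⟩
  obtain ⟨𝒞, h𝒞sub, h𝒞⟩ := exists_subset_card_eq hq
  have hNmin := Nmin_le_of_code (f := f) hw
    (hsized.mono (coe_subset.2 h𝒞sub)) (hdist.mono (coe_subset.2 h𝒞sub))
    (by rw [h𝒞, show m - w = d + 2 by omega, mul_add]; omega)
  rw [h𝒞, ← hf] at hNmin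
  have hn : n * (w + 1) = f * (w + 1) + 2 * q * (w + 1) := by rw [hf]; ring
  linarith

theorem Nmin_cw_almost_optimal_general (n k m : ℕ) (hk : 5 ≤ k) (hkm : k ≤ m)
    (hn1 : Nat.choose m (k - 2) - (m - k + 1) * maxCW m 4 (k - 3) ≤ n)
    (hn2 : n ≤ Nat.choose m (k - 2)) :
    (Nmin n k m : ℤ) ≤ (n : ℤ) * (k - 2)
      - 2 * ⌊((Nat.choose m (k - 2) : ℚ) - n) / ((m : ℚ) - k + 1)⌋ := by
  rw [floor_sub_div_sub_add_one hn2 hkm]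
  obtain ⟨w, rfl⟩ : ∃ w, k = w + 3 := ⟨k - 3, by omega⟩
  simp only [show w + 3 - 2 = w + 1 by omega, show w + 3 - 3 = w by omega] at hn1 hn2 ⊢
  have hNmin := Nmin_add_two_mul_div_le (by omega) hkm hn1 hn2
  push_cast
  linarith [(Nat.cast_le (α := ℤ)).2 hNmin]

/-- For `m ≥ k ≥ 5` and `C(m,k-2) - (m-k+1)·A(m,4,k-3) ≤ n ≤ C(m,k-2)`, if the remainder
of `C(m,k-2) - n` modulo `m-k+1` is at least `(m-k+1)/2`, then
`N(n,k,m) ≤ n(k-2) - 2⌊(C(m,k-2) - n)/(m-k+1)⌋`. -/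
theorem Nmin_cw_almost_optimal (n k m : ℕ) (hk : 5 ≤ k) (hkm : k ≤ m)
    (hn1 : Nat.choose m (k - 2) - (m - k + 1) * maxCW m 4 (k - 3) ≤ n)
    (hn2 : n ≤ Nat.choose m (k - 2))
    (hrem : ((m : ℚ) - k + 1) / 2
        ≤ (((Nat.choose m (k - 2) - n) % (m - k + 1) : ℕ) : ℚ)) :
    (Nmin n k m : ℤ) ≤ (n : ℤ) * (k - 2)
      - 2 * ⌊((Nat.choose m (k - 2) : ℚ) - n) / ((m : ℚ) - k + 1)⌋ :=
  Nmin_cw_almost_optimal_general n k m hk hkm hn1 hn2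
end

section
/- Let k, m, c be integers with 1 ≤ ⌊k/2⌋ ≤ c < k−1 and c ≤ m, and set n = (k−c−1)·A(m, 2(k−c−1), c). Then there exists a c-uniform (n, cn, k, m)-CBC; concretely, the collection consisting of k−c−1 copies of each member of a maximum family of c-subsets of an m-set with pairwise symmetric differences of cardinality at least 2(k−c−1) satisfies the restricted Hall condition HC1[k]. -/
open Finset

lemma Finset.card_symmDiff_of_card_eq {α : Type*} [DecidableEq α] {s t : Finset α}
    (h : #s = #t) : #(symmDiff s t) = 2 * #(t \ s) := by
  rw [symmDiff_def, sup_eq_union, card_union_of_disjoint disjoint_sdiff_sdiff, card_sdiff_comm h]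
  ring

lemma exists_card_eq_maxCW_s12 (m d w : ℕ) :
    ∃ F : Finset (Finset (Fin m)), #F = maxCW m d w ∧ (∀ C ∈ F, #C = w) ∧
      ∀ C ∈ F, ∀ D ∈ F, C ≠ D → d ≤ #(symmDiff C D) :=
  Nat.sSup_mem (s := {s : ℕ | ∃ F : Finset (Finset (Fin m)), #F = s ∧ (∀ C ∈ F, #C = w) ∧
      ∀ C ∈ F, ∀ D ∈ F, C ≠ D → d ≤ #(symmDiff C D)}) ⟨0, ∅, by simp⟩
    ⟨2 ^ m, by rintro _ ⟨F, rfl, -⟩; simpa using F.card_le_univ⟩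

lemma exists_fin_fiber_card_eq {β : Type*} [DecidableEq β] (F : Finset β) (r : ℕ) {n : ℕ}
    (hn : n = r * #F) : ∃ X : Fin n → β, (∀ t, X t ∈ F) ∧ ∀ C ∈ F, #{t | X t = C} = r := by
  let e : Fin n ≃ Fin r × F :=
    (finCongr hn).trans (finProdFinEquiv.symm.trans ((Equiv.refl _).prodCongr F.equivFin.symm))
  refine ⟨fun t => (e t).2, fun t => (e t).2.2, fun C hC => ?_⟩
  calc #{t | ((e t).2 : β) = C} = #{p : Fin r × F | (p.2 : β) = C} := card_equiv e (by simp)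
    _ = #(univ ×ˢ {(⟨C, hC⟩ : F)}) := by
        congr 1; ext ⟨i, D, hD⟩; simp [eq_comm]
    _ = r := by simp

section HallCondition

variable {α : Type*} [DecidableEq α] {c r : ℕ}

lemma sdiff_subset_of_card_le {C D U : Finset α} (hCU : C ⊆ U) (hDU : D ⊆ U)
    (hU : #U ≤ #C + #(D \ C)) : U \ C ⊆ D := by
  have hDC : D \ C ⊆ U \ C := sdiff_subset_sdiff hDU le_rfl
  have : #(U \ C) ≤ #(D \ C) := by rw [card_sdiff_of_subset hCU]; omega
  exact (eq_of_subset_of_card_le hDC this).symm ▸ sdiff_subset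

lemma mul_card_le_card_of_separated {P : Finset (Finset α)} {U : Finset α}
    (hP_card : ∀ C ∈ P, #C = c) (hP_sep : ∀ C ∈ P, ∀ D ∈ P, C ≠ D → r ≤ #(D \ C))
    (hP : 2 ≤ #P) (hPU : ∀ C ∈ P, C ⊆ U) (hU : #U ≤ c + r) : #P * r ≤ #U := by
  have hlarge : ∀ C ∈ P, r ≤ #(U \ C) := fun C hC => by
    obtain ⟨D, hD, hDC⟩ := exists_mem_ne hP C
    exact (hP_sep C hC D hD hDC.symm).trans (card_le_card (sdiff_subset_sdiff (hPU D hD) le_rfl))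
  have hdisj : (P : Set (Finset α)).PairwiseDisjoint (U \ ·) := fun C hC D hD hCD => by
    have hsub : U \ C ⊆ D := sdiff_subset_of_card_le (hPU C hC) (hPU D hD)
      (by rw [hP_card C hC]; have := hP_sep C hC D hD hCD; omega)
    exact disjoint_of_subset_left hsub sdiff_disjoint.symm
  calc #P * r = #P • r := rfl
    _ ≤ ∑ C ∈ P, #(U \ C) := card_nsmul_le_sum _ _ _ hlarge
    _ = #(P.biUnion (U \ ·)) := (card_biUnion hdisj).symm
    _ ≤ #U := card_le_card (biUnion_subset.2 fun _ _ => sdiff_subset)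

theorem card_le_card_biUnion_of_separated {F : Finset (Finset α)} {ι : Type*} [DecidableEq ι]
    {X : ι → Finset α} {J : Finset ι}
    (hF_card : ∀ C ∈ F, #C = c) (hF_sep : ∀ C ∈ F, ∀ D ∈ F, C ≠ D → r ≤ #(D \ C))
    (hXF : ∀ t ∈ J, X t ∈ F) (hfib : ∀ C ∈ F, #{t ∈ J | X t = C} ≤ r) (hrc : r ≤ c)
    (hJ : #J ≤ c + r + 1) : #J ≤ #(J.biUnion X) := by
  set U := J.biUnion X
  set P := J.image X
  have hPF : ∀ C ∈ P, C ∈ F := by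
    simp only [P, mem_image]
    rintro _ ⟨t, ht, rfl⟩
    exact hXF t ht
  have hPU : ∀ C ∈ P, C ⊆ U := by
    simp only [P, mem_image]
    rintro _ ⟨t, ht, rfl⟩
    exact subset_biUnion_of_mem X ht
  have hJP : #J ≤ r * #P := card_le_mul_card_image J r fun C hC => hfib C (hPF C hC)
  rcases le_or_gt (c + r + 1) #U with hU | hU
  · exact hJ.trans hU
  rcases le_or_gt #P 1 with hP | hP
  · obtain rfl | ⟨t, ht⟩ := J.eq_empty_or_nonempty
    · simp
    calc #J ≤ r * 1 := hJP.trans (Nat.mul_le_mul_left r hP)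
      _ ≤ #(X t) := by rw [hF_card _ (hXF t ht)]; omega
      _ ≤ #U := card_le_card (subset_biUnion_of_mem X ht)
  · calc #J ≤ r * #P := hJP
      _ = #P * r := mul_comm _ _
      _ ≤ #U := mul_card_le_card_of_separated (fun C hC => hF_card C (hPF C hC))
          (fun C hC D hD => hF_sep C (hPF C hC) D (hPF D hD)) hP hPU (by omega)

end HallCondition

theorem uniform_cbc_construction_general (k m c n : ℕ)
    (h2 : k / 2 ≤ c)
    (hn : n = (k - c - 1) * maxCW m (2 * (k - c - 1)) c) :
    ∃ X : Fin n → Finset (Fin m),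
      (∀ t, (X t).card = c) ∧
      (∀ J : Finset (Fin n), 1 ≤ J.card → J.card ≤ k →
          J.card ≤ (J.biUnion X).card) ∧
      ∃ F : Finset (Finset (Fin m)),
        F.card = maxCW m (2 * (k - c - 1)) c ∧
        (∀ C ∈ F, C.card = c) ∧
        (∀ C ∈ F, ∀ D ∈ F, C ≠ D → 2 * (k - c - 1) ≤ (symmDiff C D).card) ∧
        (∀ t, X t ∈ F) ∧
        (∀ C ∈ F, (Finset.univ.filter (fun t => X t = C)).card = k - c - 1) := by
  obtain ⟨F, hF_card, hF_weight, hF_dist⟩ := exists_card_eq_maxCW_s12 m (2 * (k - c - 1)) c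
  obtain ⟨X, hXF, hfib⟩ := exists_fin_fiber_card_eq F (k - c - 1) (hF_card ▸ hn)
  refine ⟨X, fun t => hF_weight _ (hXF t), fun J _ hJ => ?_, F, hF_card, hF_weight, hF_dist,
    hXF, hfib⟩
  have hF_sep : ∀ C ∈ F, ∀ D ∈ F, C ≠ D → k - c - 1 ≤ #(D \ C) := fun C hC D hD hCD => by
    have := hF_dist C hC D hD hCD
    rw [card_symmDiff_of_card_eq ((hF_weight C hC).trans (hF_weight D hD).symm)] at this
    omega
  exact card_le_card_biUnion_of_separated hF_weight hF_sep (fun t _ => hXF t)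
    (fun C hC => (card_le_card (filter_subset_filter _ (subset_univ J))).trans (hfib C hC).le)
    (by omega) (by omega)

/-- Construction of `c`-uniform CBCs for `1 ≤ ⌊k/2⌋ ≤ c < k-1`, `c ≤ m`, and
`n = (k-c-1)·A(m, 2(k-c-1), c)`: there is a `c`-uniform (n, cn, k, m)-CBC, obtained
concretely by taking `k-c-1` copies of each member of a maximum family of `c`-subsets
of an `m`-set with pairwise symmetric differences of cardinality at least `2(k-c-1)`. -/
theorem uniform_cbc_construction (k m c n : ℕ)
    (h1 : 1 ≤ k / 2) (h2 : k / 2 ≤ c) (h3 : c < k - 1) (h4 : c ≤ m)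
    (hn : n = (k - c - 1) * maxCW m (2 * (k - c - 1)) c) :
    ∃ X : Fin n → Finset (Fin m),
      (∀ t, (X t).card = c) ∧
      (∀ J : Finset (Fin n), 1 ≤ J.card → J.card ≤ k →
          J.card ≤ (J.biUnion X).card) ∧
      ∃ F : Finset (Finset (Fin m)),
        F.card = maxCW m (2 * (k - c - 1)) c ∧
        (∀ C ∈ F, C.card = c) ∧
        (∀ C ∈ F, ∀ D ∈ F, C ≠ D → 2 * (k - c - 1) ≤ (symmDiff C D).card) ∧
        (∀ t, X t ∈ F) ∧
        (∀ C ∈ F, (Finset.univ.filter (fun t => X t = C)).card = k - c - 1) :=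
  uniform_cbc_construction_general k m c n h2 hn
end

section
/- Let k and m be integers with 2 ≤ k ≤ m. Then N(m+1, k, m) = m + k, i.e. the minimum total storage of an (m+1, N, k, m)-combinatorial batch code equals m + k. -/
open Finset

namespace CombinatorialBatchCode

variable {ι α : Type*} [DecidableEq α]

def RestrictedHall (k : ℕ) (X : ι → Finset α) : Prop :=
  ∀ J : Finset ι, 1 ≤ #J → #J ≤ k → #J ≤ #(J.biUnion X)

variable {X : ι → Finset α}

section MinimalDeficient

variable [DecidableEq ι] {J : Finset ι}

theorem exists_minimal_deficient (hdef : #(J.biUnion X) < #J) :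
    ∃ J' ⊆ J, #(J'.biUnion X) < #J' ∧ ∀ i ∈ J', #(J'.erase i) ≤ #((J'.erase i).biUnion X) := by
  obtain ⟨J', ⟨hJ'J, hJ'def⟩, hJ'min⟩ :=
    wellFounded_lt.has_min {J' | J' ⊆ J ∧ #(J'.biUnion X) < #J'} ⟨J, subset_rfl, hdef⟩
  refine ⟨J', hJ'J, hJ'def, fun i hi => not_lt.1 fun h => hJ'min _ ⟨?_, h⟩ (erase_ssubset hi)⟩
  exact (erase_subset i J').trans hJ'J

theorem biUnion_erase_eq_of_minimal_deficient (hdef : #(J.biUnion X) < #J)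
    (hmin : ∀ i ∈ J, #(J.erase i) ≤ #((J.erase i).biUnion X)) {i : ι} (hi : i ∈ J) :
    (J.erase i).biUnion X = J.biUnion X := by
  refine eq_of_subset_of_card_le (biUnion_subset_biUnion_of_subset_left _ (erase_subset i J)) ?_
  have := hmin i hi
  rw [card_erase_of_mem hi] at this
  omega

/-- In a minimal deficient family every covered point is covered at least twice: otherwise
dropping the unique set covering it would leave a smaller deficient family. -/
theorem two_le_card_filter_mem_of_minimal_deficient (hdef : #(J.biUnion X) < #J)
    (hmin : ∀ i ∈ J, #(J.erase i) ≤ #((J.erase i).biUnion X)) {x : α} (hx : x ∈ J.biUnion X) :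
    2 ≤ #{i ∈ J | x ∈ X i} := by
  obtain ⟨i, hi, hxi⟩ := mem_biUnion.1 hx
  rw [← biUnion_erase_eq_of_minimal_deficient hdef hmin hi] at hx
  obtain ⟨i', hi', hxi'⟩ := mem_biUnion.1 hx
  obtain ⟨hi'i, hi'J⟩ := mem_erase.1 hi'
  calc 2 = #{i', i} := (card_pair hi'i).symm
    _ ≤ #{i ∈ J | x ∈ X i} := card_le_card <| by
      simp only [insert_subset_iff, singleton_subset_iff, mem_filter]
      exact ⟨⟨hi'J, hxi'⟩, hi, hxi⟩

theorem two_mul_card_sub_one_le_sum_card_of_minimal_deficient (hdef : #(J.biUnion X) < #J)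
    (hmin : ∀ i ∈ J, #(J.erase i) ≤ #((J.erase i).biUnion X)) :
    2 * (#J - 1) ≤ ∑ i ∈ J, #(X i) := by
  obtain ⟨i, hi⟩ : J.Nonempty := card_pos.1 (by omega)
  have hunion : #J - 1 ≤ #(J.biUnion X) := by
    rw [← biUnion_erase_eq_of_minimal_deficient hdef hmin hi, ← card_erase_of_mem hi]
    exact hmin i hi
  have hdouble : ∑ i ∈ J, #(X i) = ∑ x ∈ J.biUnion X, #{i ∈ J | x ∈ X i} := by
    refine (sum_congr rfl fun i hi => congrArg card ?_).trans
      (sum_card_bipartiteAbove_eq_sum_card_bipartiteBelow (fun i x => x ∈ X i))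
    exact (filter_mem_eq_inter.trans (inter_eq_right.2 (subset_biUnion_of_mem X hi))).symm
  calc 2 * (#J - 1) ≤ #(J.biUnion X) * 2 := by rw [mul_comm]; gcongr
    _ ≤ ∑ x ∈ J.biUnion X, #{i ∈ J | x ∈ X i} :=
      card_nsmul_le_sum _ _ _ fun x hx => two_le_card_filter_mem_of_minimal_deficient hdef hmin hx
    _ = ∑ i ∈ J, #(X i) := hdouble.symm

end MinimalDeficient

theorem RestrictedHall.card_add_le_sum_card_add_one [Fintype ι] [Fintype α] {k : ℕ}
    (hX : RestrictedHall k X) (hk : 1 ≤ k) (hcard : Fintype.card α < Fintype.card ι) :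
    Fintype.card ι + k ≤ ∑ i, #(X i) + 1 := by
  classical
  have huniv : #((univ : Finset ι).biUnion X) < #(univ : Finset ι) :=
    (card_le_univ _).trans_lt (card_univ (α := ι) ▸ hcard)
  obtain ⟨J, -, hdef, hmin⟩ := exists_minimal_deficient huniv
  have hkJ : k < #J := by
    by_contra! h
    exact (hX J (by omega) h).not_gt hdef
  have hin := two_mul_card_sub_one_le_sum_card_of_minimal_deficient hdef hmin
  have hout : #Jᶜ ≤ ∑ i ∈ Jᶜ, #(X i) := by
    simpa using card_nsmul_le_sum Jᶜ (fun i => #(X i)) 1 fun i _ => by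
      simpa using hX {i} (by simp) (by simpa using hk)
  rw [card_compl] at hout
  have hJ : #J ≤ Fintype.card ι := card_le_univ J
  have hsplit := sum_add_sum_compl J fun i => #(X i)
  omega

theorem exists_restrictedHall_sum_card_eq {k m : ℕ} (hkm : k ≤ m) :
    ∃ X : Fin (m + 1) → Finset (Fin m), ∑ t, #(X t) = m + k ∧ RestrictedHall k X := by
  obtain ⟨A, -, hA⟩ := exists_subset_card_eq (s := (univ : Finset (Fin m))) (by simpa using hkm)
  refine ⟨Fin.lastCases A fun i => {i}, by simp [Fin.sum_univ_castSucc, hA, add_comm], ?_⟩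
  intro J _ hJk
  by_cases hlast : Fin.last m ∈ J
  · calc #J ≤ #A := hA ▸ hJk
      _ ≤ _ := card_le_card fun x hx => mem_biUnion.2 ⟨_, hlast, by simpa using hx⟩
  · calc #J ≤ #((J.biUnion (Fin.lastCases A fun i => {i})).map Fin.castSuccEmb) := by
          refine card_le_card fun i hi => ?_
          obtain ⟨i, rfl⟩ := Fin.exists_castSucc_eq.2 (ne_of_mem_of_not_mem hi hlast)
          exact mem_map_of_mem _ (mem_biUnion.2 ⟨_, hi, by simp⟩)
      _ = _ := card_map _

end CombinatorialBatchCode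

/-- For `2 ≤ k ≤ m`, the minimum total storage of an (m+1, N, k, m)-CBC is
`N(m+1,k,m) = m + k`. -/
theorem Nmin_n_eq_m_succ (k m : ℕ) (hk : 2 ≤ k) (hkm : k ≤ m) :
    Nmin (m + 1) k m = m + k := by
  obtain ⟨X, hXsum, hX⟩ := CombinatorialBatchCode.exists_restrictedHall_sum_card_eq hkm
  refine le_antisymm (Nat.sInf_le ⟨X, hXsum, hX⟩) (le_csInf ⟨_, X, hXsum, hX⟩ ?_)
  rintro _ ⟨Y, rfl, hY⟩
  have := CombinatorialBatchCode.RestrictedHall.card_add_le_sum_card_add_one hY (by omega) (by simp)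
  rw [Fintype.card_fin] at this
  omega
end
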